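/- arXiv:gr-qc/0408071 — 4 statements merged into one kernel-verified Lean document; each statement's English description precedes it below -/
import Mathlib

section
/- Let P_{abcde} be a 5-tensor on a vector space, antisymmetric in (a,b) and in (c,d,e), satisfying P_{a[bcde]} = 0. Then P(a,b;c,d,e) = P(c,d;e,a,b) + P(d,e;c,a,b) + P(e,c;d,a,b) for all vectors a,b,c,d,e. -/
open Equiv

private lemma sum_perm_succ' {n : ℕ} (g : Perm (Fin (n+1)) → ℝ) :
    ∑ σ : Perm (Fin (n+1)), g σ =
      ∑ p : Fin (n+1), ∑ e : Perm (Fin n), g (Equiv.Perm.decomposeFin.symm (p, e)) := by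
  rw [← Equiv.sum_comp Equiv.Perm.decomposeFin.symm g, Fintype.sum_prod_type]

private lemma decompose_app2' {n : ℕ} (p : Fin (n+3)) (e : Perm (Fin (n+2))) :
    Equiv.Perm.decomposeFin.symm (p, e) 2 = swap 0 p (e 1).succ :=
  Equiv.Perm.decomposeFin_symm_apply_succ e p 1

private lemma decompose_app3' {n : ℕ} (p : Fin (n+4)) (e : Perm (Fin (n+3))) :
    Equiv.Perm.decomposeFin.symm (p, e) 3 = swap 0 p (e 2).succ :=
  Equiv.Perm.decomposeFin_symm_apply_succ e p 2

private lemma succ_two_eq_three' : (2 : Fin 3).succ = 3 := rfl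

private lemma sign_default_perm_fin_zero' :
    Equiv.Perm.sign (default : Perm (Fin 0)) = 1 := by decide

private lemma default_fin_one' : (default : Fin 1) = 0 := rfl

open Equiv in
/-- a 5-linear form `P` antisymmetric in its first two and last three slots
with `P_{a[bcde]} = 0` satisfies `P_{abcde} = 3 P_{[cde]ab}`, explicitly
`P(a,b,c,d,e) = P(c,d,e,a,b) + P(d,e,c,a,b) + P(e,c,d,a,b)`. -/
theorem potential_cyclic_identity
    (V : Type*) [AddCommGroup V] [Module ℝ V]
    (P : V → V → V → V → V → ℝ)
    (hA1 : ∀ a b c d e, P b a c d e = - P a b c d e)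
    (hA2 : ∀ a b c d e, P a b d c e = - P a b c d e)
    (hA3 : ∀ a b c d e, P a b c e d = - P a b c d e)
    (hB : ∀ (a : V) (v : Fin 4 → V),
      ∑ σ : Equiv.Perm (Fin 4), ((Equiv.Perm.sign σ : ℤ) : ℝ) *
        P a (v (σ 0)) (v (σ 1)) (v (σ 2)) (v (σ 3)) = 0) :
    ∀ a b c d e, P a b c d e = P c d e a b + P d e c a b + P e c d a b := by
  have key : ∀ a b c d e : V,
      P a b c d e - P a b c e d - P a b d c e + P a b d e c + P a b e c d - P a b e d c - P a c b d e + P a c b e d + P a c d b e - P a c d e b - P a c e b d + P a c e d b + P a d b c e - P a d b e c - P a d c b e + P a d c e b + P a d e b c - P a d e c b - P a e b c d + P a e b d c + P a e c b d - P a e c d b - P a e d b c + P a e d c b = 0 := by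
    intro a b c d e
    have h := hB a ![b, c, d, e]
    simp only [sum_perm_succ'] at h
    simp only [Nat.reduceAdd, Fin.sum_univ_four, Fin.sum_univ_three, Fin.sum_univ_two,
      Fin.sum_univ_one, Finset.univ_unique, Finset.sum_singleton] at h
    simp (config := { decide := true }) only [Equiv.Perm.decomposeFin_symm_apply_zero,
      Equiv.Perm.decomposeFin_symm_apply_one, decompose_app2', decompose_app3',
      Equiv.Perm.decomposeFin.symm_sign, Equiv.swap_apply_def, default_fin_one',
      Fin.succ_zero_eq_one, Fin.succ_one_eq_two, succ_two_eq_three',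
      sign_default_perm_fin_zero', mul_one, one_mul, if_true, if_false,
      Matrix.cons_val_zero, Matrix.cons_val_one, Matrix.head_cons,
      Matrix.cons_val_two, Matrix.cons_val_three, Matrix.tail_cons] at h
    push_cast at h
    linear_combination h
  intro a b c d e
  linear_combination
      ((1:ℝ)/12) * hA1 a b c d e +
      ((-1:ℝ)/12) * hA1 a b c e d +
      ((-1:ℝ)/12) * hA1 a b d c e +
      ((1:ℝ)/12) * hA1 a b d e c +
      ((1:ℝ)/12) * hA1 a b e c d +
      ((-1:ℝ)/12) * hA1 a b e d c +
      ((1:ℝ)/12) * hA1 a c b d e +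
      ((-1:ℝ)/12) * hA1 a c b e d +
      ((-1:ℝ)/12) * hA1 a c d b e +
      ((1:ℝ)/12) * hA1 a c d e b +
      ((1:ℝ)/12) * hA1 a c e b d +
      ((-1:ℝ)/12) * hA1 a c e d b +
      ((-1:ℝ)/12) * hA1 a d b c e +
      ((1:ℝ)/12) * hA1 a d b e c +
      ((1:ℝ)/12) * hA1 a d c b e +
      ((-1:ℝ)/12) * hA1 a d c e b +
      ((-1:ℝ)/12) * hA1 a d e b c +
      ((1:ℝ)/12) * hA1 a d e c b +
      ((1:ℝ)/12) * hA1 a e b c d +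
      ((-1:ℝ)/12) * hA1 a e b d c +
      ((-1:ℝ)/12) * hA1 a e c b d +
      ((1:ℝ)/12) * hA1 a e c d b +
      ((1:ℝ)/12) * hA1 a e d b c +
      ((-1:ℝ)/12) * hA1 a e d c b +
      ((-1:ℝ)/12) * hA1 b c a d e +
      ((1:ℝ)/12) * hA1 b c a e d +
      ((1:ℝ)/12) * hA1 b c d a e +
      ((-1:ℝ)/12) * hA1 b c d e a +
      ((-1:ℝ)/12) * hA1 b c e a d +
      ((1:ℝ)/12) * hA1 b c e d a +
      ((1:ℝ)/12) * hA1 b d a c e +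
      ((-1:ℝ)/12) * hA1 b d a e c +
      ((-1:ℝ)/12) * hA1 b d c a e +
      ((1:ℝ)/12) * hA1 b d c e a +
      ((1:ℝ)/12) * hA1 b d e a c +
      ((-1:ℝ)/12) * hA1 b d e c a +
      ((-1:ℝ)/12) * hA1 b e a c d +
      ((1:ℝ)/12) * hA1 b e a d c +
      ((1:ℝ)/12) * hA1 b e c a d +
      ((-1:ℝ)/12) * hA1 b e c d a +
      ((-1:ℝ)/12) * hA1 b e d a c +
      ((1:ℝ)/12) * hA1 b e d c a +
      ((-1:ℝ)/12) * hA1 c d a b e +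
      ((1:ℝ)/12) * hA1 c d a e b +
      ((1:ℝ)/12) * hA1 c d b a e +
      ((-1:ℝ)/12) * hA1 c d b e a +
      ((-1:ℝ)/12) * hA1 c d e a b +
      ((1:ℝ)/12) * hA1 c d e b a +
      ((1:ℝ)/12) * hA1 c e a b d +
      ((-1:ℝ)/12) * hA1 c e a d b +
      ((-1:ℝ)/12) * hA1 c e b a d +
      ((1:ℝ)/12) * hA1 c e b d a +
      ((-11:ℝ)/12) * hA1 c e d a b +
      ((-1:ℝ)/12) * hA1 c e d b a +
      ((-1:ℝ)/12) * hA1 d e a b c +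
      ((1:ℝ)/12) * hA1 d e a c b +
      ((1:ℝ)/12) * hA1 d e b a c +
      ((-1:ℝ)/12) * hA1 d e b c a +
      ((-1:ℝ)/12) * hA1 d e c a b +
      ((1:ℝ)/12) * hA1 d e c b a +
      ((1:ℝ)/2) * hA2 a b c d e +
      ((-1:ℝ)/6) * hA2 a b c e d +
      ((1:ℝ)/6) * hA2 a b d e c +
      ((-1:ℝ)/2) * hA2 c d a b e +
      ((-5:ℝ)/6) * hA2 c d a e b +
      ((-1:ℝ)/6) * hA2 c d b e a +
      ((1:ℝ)/2) * hA2 c e a b d +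
      ((5:ℝ)/6) * hA2 c e a d b +
      ((1:ℝ)/6) * hA2 c e b d a +
      ((-1:ℝ)/2) * hA2 d e a b c +
      ((-5:ℝ)/6) * hA2 d e a c b +
      ((-1:ℝ)/6) * hA2 d e b c a +
      ((1:ℝ)/3) * hA3 a b c d e +
      ((-1:ℝ)/3) * hA3 a b d c e +
      ((2:ℝ)/3) * hA3 c d a b e +
      ((1:ℝ)/3) * hA3 c d b a e +
      ((-2:ℝ)/3) * hA3 c e a b d +
      ((-1:ℝ)/3) * hA3 c e b a d +
      ((2:ℝ)/3) * hA3 d e a b c +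
      ((1:ℝ)/3) * hA3 d e b a c +
      ((1:ℝ)/12) * key a b c d e +
      ((-1:ℝ)/12) * key b a c d e +
      ((-1:ℝ)/12) * key c a b d e +
      ((1:ℝ)/12) * key d a b c e +
      ((-1:ℝ)/12) * key e a b c d
end

section
/- Let P_{abcde} be antisymmetric in (a,b) and (c,d,e) with P_{a[bcde]} = 0, and suppose additionally the trace condition P^{ab}{}_{abc} = 0 holds (double contraction with a nondegenerate metric g). Then the single-trace tensor Q_{bcd} := g^{ae} P_{ab cde} (contracting the first slot with the last slot) satisfies Q_{[bcd]} = 0. -/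
open Finset Equiv

private lemma app2' {n : ℕ} (e : Equiv.Perm (Fin (n+2))) (p : Fin (n+3)) :
    Equiv.Perm.decomposeFin.symm (p, e) 2 = Equiv.swap 0 p (e 1).succ := by
  rw [show (2 : Fin (n+3)) = (1 : Fin (n+2)).succ from rfl,
    Equiv.Perm.decomposeFin_symm_apply_succ]

private lemma app3' {n : ℕ} (e : Equiv.Perm (Fin (n+3))) (p : Fin (n+4)) :
    Equiv.Perm.decomposeFin.symm (p, e) 3 = Equiv.swap 0 p (e 2).succ := by
  rw [show (3 : Fin (n+4)) = (2 : Fin (n+3)).succ from rfl,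
    Equiv.Perm.decomposeFin_symm_apply_succ]

private lemma key_bianchi (n : ℕ)
    (P : Fin n → Fin n → Fin n → Fin n → Fin n → ℝ)
    (hA2 : ∀ a b c d e, P a b d c e = - P a b c d e)
    (hA3 : ∀ a b c d e, P a b c e d = - P a b c d e)
    (hB : ∀ (a : Fin n) (v : Fin 4 → Fin n),
      ∑ σ : Equiv.Perm (Fin 4), ((Equiv.Perm.sign σ : ℤ) : ℝ) *
        P a (v (σ 0)) (v (σ 1)) (v (σ 2)) (v (σ 3)) = 0)
    (a b c d e : Fin n) :
    P a b c d e - P a c b d e + P a d b c e - P a e b c d = 0 := by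
  have h := hB a ![b, c, d, e]
  rw [← Equiv.sum_comp (Equiv.Perm.decomposeFin.symm)] at h
  rw [Fintype.sum_prod_type] at h
  conv at h => lhs; enter [2, p]; rw [← Equiv.sum_comp (Equiv.Perm.decomposeFin.symm)]; rw [Fintype.sum_prod_type]
  conv at h => lhs; enter [2, p, 2, q]; rw [← Equiv.sum_comp (Equiv.Perm.decomposeFin.symm)]; rw [Fintype.sum_prod_type]
  simp only [Fintype.sum_subsingleton _ (1 : Equiv.Perm (Fin 1))] at h
  simp only [Fin.sum_univ_four, Fin.sum_univ_succ, Fin.sum_univ_two, Fin.sum_univ_one,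
    Fin.sum_univ_zero] at h
  simp (config := { decide := true }) only [← Prod.mk_one_one, Equiv.Perm.decomposeFin.symm_sign,
    Equiv.Perm.decomposeFin_symm_apply_zero, Equiv.Perm.decomposeFin_symm_apply_one,
    app2', app3', Equiv.Perm.decomposeFin_symm_of_one,
    Equiv.Perm.sign_swap', Equiv.Perm.sign_one, Equiv.swap_apply_def, Equiv.Perm.one_apply] at h
  norm_num [Fin.succ, Matrix.cons_val_zero, Matrix.cons_val_one, Matrix.head_cons] at h
  linarith [h, hA2 a b c d e, hA3 a b c d e, hA2 a b c e d, hA3 a b c e d, hA2 a b d c e, hA3 a b d c e, hA2 a b d e c, hA3 a b d e c, hA2 a b e c d, hA3 a b e c d, hA2 a b e d c, hA3 a b e d c, hA2 a c b d e, hA3 a c b d e, hA2 a c b e d, hA3 a c b e d, hA2 a c d b e, hA3 a c d b e, hA2 a c d e b, hA3 a c d e b, hA2 a c e b d, hA3 a c e b d, hA2 a c e d b, hA3 a c e d b, hA2 a d b c e, hA3 a d b c e, hA2 a d b e c, hA3 a d b e c, hA2 a d c b e, hA3 a d c b e, hA2 a d c e b, hA3 a d c e b, hA2 a d e b c, hA3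 a d e b c, hA2 a d e c b, hA3 a d e c b, hA2 a e b c d, hA3 a e b c d, hA2 a e b d c, hA3 a e b d c, hA2 a e c b d, hA3 a e c b d, hA2 a e c d b, hA3 a e c d b, hA2 a e d b c, hA3 a e d b c, hA2 a e d c b, hA3 a e d c b]

open Finset Equiv in
/-- let `P_{abcde}` be antisymmetric in `(a,b)` and `(c,d,e)` with
`P_{a[bcde]} = 0` and doubly traceless, `g^{ac} g^{bd} P_{abcde} = 0`, for a nondegenerate
symmetric metric `g`.  Then the single trace `Q_{bcd} := g^{ae} P_{abcde}` (first slot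
contracted with the last slot) satisfies `Q_{[bcd]} = 0`. -/
theorem single_trace_cyclic_free (n : ℕ)
    (g : Matrix (Fin n) (Fin n) ℝ) (hsym : g.IsSymm) (hg : IsUnit g.det)
    (P : Fin n → Fin n → Fin n → Fin n → Fin n → ℝ)
    (hA1 : ∀ a b c d e, P b a c d e = - P a b c d e)
    (hA2 : ∀ a b c d e, P a b d c e = - P a b c d e)
    (hA3 : ∀ a b c d e, P a b c e d = - P a b c d e)
    (hB : ∀ (a : Fin n) (v : Fin 4 → Fin n),
      ∑ σ : Equiv.Perm (Fin 4), ((Equiv.Perm.sign σ : ℤ) : ℝ) *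
        P a (v (σ 0)) (v (σ 1)) (v (σ 2)) (v (σ 3)) = 0)
    (htr : ∀ e, ∑ a, ∑ b, ∑ c, ∑ d, g⁻¹ a c * g⁻¹ b d * P a b c d e = 0)
    (Q : Fin n → Fin n → Fin n → ℝ)
    (hQ : ∀ b c d, Q b c d = ∑ a, ∑ e, g⁻¹ a e * P a b c d e) :
    ∀ b c d, Q b c d + Q c d b + Q d b c - Q b d c - Q c b d - Q d c b = 0 := by
  -- the inverse metric is symmetric
  have hs : ∀ a e : Fin n, g⁻¹ e a = g⁻¹ a e := by
    intro a e
    have ht : (g⁻¹).transpose = g⁻¹ := by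
      rw [Matrix.transpose_nonsing_inv]
      rw [Matrix.IsSymm] at hsym
      rw [hsym]
    calc g⁻¹ e a = (g⁻¹).transpose a e := rfl
    _ = g⁻¹ a e := by rw [ht]
  -- the "wrong" trace vanishes by antisymmetry in the first pair
  have hT : ∀ b c d : Fin n, (∑ a, ∑ e, g⁻¹ a e * P a e b c d) = 0 := by
    intro b c d
    have h1 : (∑ a, ∑ e, g⁻¹ a e * P a e b c d) = ∑ e, ∑ a, g⁻¹ a e * P a e b c d :=
      Finset.sum_comm
    have h2 : (∑ e, ∑ a, g⁻¹ a e * P a e b c d)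
        = ∑ a, ∑ e, (- (g⁻¹ a e * P a e b c d)) := by
      apply Finset.sum_congr rfl; intro a _
      apply Finset.sum_congr rfl; intro e _
      rw [hs, hA1]; ring
    simp only [Finset.sum_neg_distrib] at h2
    linarith [h1, h2]
  -- the cyclic identity for Q
  have hcyc : ∀ b c d : Fin n, Q b c d - Q c b d + Q d b c = 0 := by
    intro b c d
    have hsum : Q b c d - Q c b d + Q d b c = ∑ a, ∑ e, g⁻¹ a e * P a e b c d := by
      rw [hQ, hQ, hQ]
      rw [← Finset.sum_sub_distrib, ← Finset.sum_add_distrib]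
      apply Finset.sum_congr rfl; intro a _
      rw [← Finset.sum_sub_distrib, ← Finset.sum_add_distrib]
      apply Finset.sum_congr rfl; intro e _
      have hk := key_bianchi n P hA2 hA3 hB a b c d e
      linear_combination (g⁻¹ a e) * hk
    rw [hsum, hT b c d]
  -- Q is antisymmetric in its last two slots
  have hanti : ∀ b c d : Fin n, Q b d c = - Q b c d := by
    intro b c d
    rw [hQ, hQ, ← Finset.sum_neg_distrib]
    apply Finset.sum_congr rfl; intro a _
    rw [← Finset.sum_neg_distrib]
    apply Finset.sum_congr rfl; intro e _
    rw [hA2]; ring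
  intro b c d
  have h1 := hcyc b c d
  have h2 := hcyc c d b
  have h3 := hanti b c d
  have h4 := hanti c d b
  have h5 := hanti d b c
  linarith
end

section
/- Let V be a 4-dimensional oriented vector space with a nondegenerate metric g of determinant sign ε, and volume form η. For any traceless double (2,2)-form W (antisymmetric in (a,b) and (c,d) with g^{ac}W_{abcd}... all traces zero), the double Hodge dual (*W*)_{abcd} := (1/4) η_{ab}{}^{ef} η_{cd}{}^{gh} W_{efgh} satisfies (*W*)_{abcd} = ε·W_{abcd}. -/
open Finset

/-- The Levi-Civita symbol in 4 dimensions. -/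
noncomputable def leviCivita (a b c d : Fin 4) : ℝ :=
  if h : Function.Bijective ![a, b, c, d] then
    ((Equiv.Perm.sign (Equiv.ofBijective _ h) : ℤ) : ℝ)
  else 0

/-- The components of the canonical volume 4-form of a metric `g` in 4 dimensions,
in a (positively oriented) basis: `η_{abcd} = √|det g| · ε_{abcd}`. -/
noncomputable def vol (g : Matrix (Fin 4) (Fin 4) ℝ) (a b c d : Fin 4) : ℝ :=
  Real.sqrt |g.det| * leviCivita a b c d

/-- The volume form with its last two indices raised by `g`:
`η_{ab}{}^{ef} = g^{ee'} g^{ff'} η_{abe'f'}`. -/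
noncomputable def volUp2 (g : Matrix (Fin 4) (Fin 4) ℝ) (a b e f : Fin 4) : ℝ :=
  ∑ e', ∑ f', g⁻¹ e' e * g⁻¹ f' f * vol g a b e' f'

/- ### auxiliary: explicit Levi-Civita symbol -/

def epsE (a b c d : Fin 4) : ℤ :=
  ((b:ℤ)-a).sign * ((c:ℤ)-a).sign * ((d:ℤ)-a).sign *
  ((c:ℤ)-b).sign * ((d:ℤ)-b).sign * ((d:ℤ)-c).sign

def kr (i j : Fin 4) : ℤ := if i = j then 1 else 0

noncomputable def eps (a b c d : Fin 4) : ℝ := (epsE a b c d : ℝ)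
noncomputable def kR (i j : Fin 4) : ℝ := if i = j then 1 else 0

lemma epsE_sign : ∀ σ : Equiv.Perm (Fin 4), epsE (σ 0) (σ 1) (σ 2) (σ 3) = Equiv.Perm.sign σ := by
  decide

lemma epsE_zero : ∀ a b c d : Fin 4, ¬ Function.Bijective ![a,b,c,d] → epsE a b c d = 0 := by
  decide

lemma not_bij_cases : ∀ a b c d : Fin 4, ¬ Function.Bijective ![a,b,c,d] →
    a = b ∨ a = c ∨ a = d ∨ b = c ∨ b = d ∨ c = d := by decide

lemma leviCivita_eq (a b c d : Fin 4) : leviCivita a b c d = eps a b c d := by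
  unfold leviCivita eps
  split_ifs with h
  · have := epsE_sign (Equiv.ofBijective _ h)
    have h0 : (Equiv.ofBijective _ h) 0 = a := rfl
    have h1 : (Equiv.ofBijective _ h) 1 = b := rfl
    have h2 : (Equiv.ofBijective _ h) 2 = c := rfl
    have h3 : (Equiv.ofBijective _ h) 3 = d := rfl
    rw [h0, h1, h2, h3] at this
    rw [this]
  · rw [epsE_zero a b c d h]; norm_num

lemma L1Z (a b e f c d p q : Fin 4) :
  epsE a b e f * epsE c d p q = kr a c * kr b d * kr e p * kr f q - kr a c * kr b d * kr e q * kr f p - kr a c * kr b p * kr e d * kr f q + kr a c * kr b p * kr e q * kr f d + kr a c * kr b q * kr e d * kr f p - kr a c * kr b q * kr e p * kr f d - kr a d * kr b c * kr e p * kr f q + kr a d * kr b c * kr e q * kr f p + kr a d * kr b p * kr e c * kr f q - kr a d * kr b p * kr e q * kr f c - kr a d * kr b q * kr e c * kr f p + kr a d * kr b q * kr e p * kr f c + kr a p * kr b c * kr e d * kr f q - kr a p * kr b c * kr e q * kr f d - kr a p * kr b d * kr e c * kr f q + kr a p * kr b d * kr e q * kr f c + kr a p * kr b q * kr e c * kr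 f d - kr a p * kr b q * kr e d * kr f c - kr a q * kr b c * kr e d * kr f p + kr a q * kr b c * kr e p * kr f d + kr a q * kr b d * kr e c * kr f p - kr a q * kr b d * kr e p * kr f c - kr a q * kr b p * kr e c * kr f d + kr a q * kr b p * kr e d * kr f c := by
  by_cases h1 : Function.Bijective ![a,b,e,f]
  · by_cases h2 : Function.Bijective ![c,d,p,q]
    · exact (by decide : ∀ σ τ : Equiv.Perm (Fin 4),
        epsE (σ 0) (σ 1) (σ 2) (σ 3) * epsE (τ 0) (τ 1) (τ 2) (τ 3) =
          kr (σ 0) (τ 0) * kr (σ 1) (τ 1) * kr (σ 2) (τ 2) * kr (σ 3) (τ 3) - kr (σ 0) (τ 0) * kr (σ 1) (τ 1) * kr (σ 2) (τ 3) * kr (σ 3) (τ 2) - kr (σ 0) (τ 0) * kr (σ 1) (τ 2) * kr (σ 2) (τ 1) * kr (σ 3) (τ 3) + kr (σ 0) (τ 0) * kr (σ 1) (τ 2) * kr (σ 2) (τ 3) * kr (σ 3) (τ 1) + kr (σ 0) (τ 0) * kr (σ 1) (τ 3) * kr (σ 2) (τ 1) * kr (σ 3) (τ 2) - kr (σ 0)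 (τ 0) * kr (σ 1) (τ 3) * kr (σ 2) (τ 2) * kr (σ 3) (τ 1) - kr (σ 0) (τ 1) * kr (σ 1) (τ 0) * kr (σ 2) (τ 2) * kr (σ 3) (τ 3) + kr (σ 0) (τ 1) * kr (σ 1) (τ 0) * kr (σ 2) (τ 3) * kr (σ 3) (τ 2) + kr (σ 0) (τ 1) * kr (σ 1) (τ 2) * kr (σ 2) (τ 0) * kr (σ 3) (τ 3) - kr (σ 0) (τ 1) * kr (σ 1) (τ 2) * kr (σ 2) (τ 3) * kr (σ 3) (τ 0) - kr (σ 0) (τ 1) * kr (σ 1) (τ 3) * kr (σ 2) (τ 0) * kr (σ 3) (τ 2) + kr (σ 0) (τ 1) * kr (σ 1) (τ 3) * kr (σ 2) (τ 2) * kr (σ 3) (τ 0) + kr (σ 0) (τ 2) * kr (σ 1) (τ 0) * kr (σ 2) (τ 1) * kr (σ 3) (τ 3) - kr (σ 0) (τ 2) * kr (σ 1) (τ 0) * kr (σ 2) (τ 3) * kr (σ 3) (τ 1) - kr (σ 0) (τ 2) * kr (σ 1) (τ 1) * kr (σ 2) (τ 0) * kr (σ 3) (τ 3) + kr (σ 0)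 (τ 2) * kr (σ 1) (τ 1) * kr (σ 2) (τ 3) * kr (σ 3) (τ 0) + kr (σ 0) (τ 2) * kr (σ 1) (τ 3) * kr (σ 2) (τ 0) * kr (σ 3) (τ 1) - kr (σ 0) (τ 2) * kr (σ 1) (τ 3) * kr (σ 2) (τ 1) * kr (σ 3) (τ 0) - kr (σ 0) (τ 3) * kr (σ 1) (τ 0) * kr (σ 2) (τ 1) * kr (σ 3) (τ 2) + kr (σ 0) (τ 3) * kr (σ 1) (τ 0) * kr (σ 2) (τ 2) * kr (σ 3) (τ 1) + kr (σ 0) (τ 3) * kr (σ 1) (τ 1) * kr (σ 2) (τ 0) * kr (σ 3) (τ 2) - kr (σ 0) (τ 3) * kr (σ 1) (τ 1) * kr (σ 2) (τ 2) * kr (σ 3) (τ 0) - kr (σ 0) (τ 3) * kr (σ 1) (τ 2) * kr (σ 2) (τ 0) * kr (σ 3) (τ 1) + kr (σ 0) (τ 3) * kr (σ 1) (τ 2) * kr (σ 2) (τ 1) * kr (σ 3) (τ 0))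
        (Equiv.ofBijective _ h1) (Equiv.ofBijective _ h2)
    · rw [epsE_zero _ _ _ _ h2, mul_zero]
      rcases not_bij_cases _ _ _ _ h2 with h|h|h|h|h|h <;> subst h <;> ring
  · rw [epsE_zero _ _ _ _ h1, zero_mul]
    rcases not_bij_cases _ _ _ _ h1 with h|h|h|h|h|h <;> subst h <;> ring

lemma L1R (a b e f c d p q : Fin 4) :
  eps a b e f * eps c d p q = kR a c * kR b d * kR e p * kR f q - kR a c * kR b d * kR e q * kR f p - kR a c * kR b p * kR e d * kR f q + kR a c * kR b p * kR e q * kR f d + kR a c * kR b q * kR e d * kR f p - kR a c * kR b q * kR e p * kR f d - kR a d * kR b c * kR e p * kR f q + kR a d * kR b c * kR e q * kR f p + kR a d * kR b p * kR e c * kR f q - kR a d * kR b p * kR e q * kR f c - kR a d * kR b q * kR e c * kR f p + kR a d * kR b q * kR e p * kR f c + kR a p * kR b c * kR e d * kR f q - kR a p * kR b c * kR e q * kR f d - kR a p * kR b d * kR e c * kR f q + kR a p * kR b d * kR e q * kR f c + kR a p * kR b q * kR e c * kR f d - kR a p * kR b q * kR e d * kR f c - kR a q * kR b c * kR e d * kR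 f p + kR a q * kR b c * kR e p * kR f d + kR a q * kR b d * kR e c * kR f p - kR a q * kR b d * kR e p * kR f c - kR a q * kR b p * kR e c * kR f d + kR a q * kR b p * kR e d * kR f c := by
  have h2 : (eps a b e f * eps c d p q) = (((kr a c * kr b d * kr e p * kr f q - kr a c * kr b d * kr e q * kr f p - kr a c * kr b p * kr e d * kr f q + kr a c * kr b p * kr e q * kr f d + kr a c * kr b q * kr e d * kr f p - kr a c * kr b q * kr e p * kr f d - kr a d * kr b c * kr e p * kr f q + kr a d * kr b c * kr e q * kr f p + kr a d * kr b p * kr e c * kr f q - kr a d * kr b p * kr e q * kr f c - kr a d * kr b q * kr e c * kr f p + kr a d * kr b q * kr e p * kr f c + kr a p * kr b c * kr e d * kr f q - kr a p * kr b c * kr e q * kr f d - kr a p * kr b d * kr e c * kr f q + kr a p * kr b d * kr e q * kr f c + kr a p * kr b q * kr e c * kr f d - kr a p * kr b q * kr e d * kr f c - kr a q * kr b c * kr e d * kr f p + kr a q * kr b c * kr e p * kr f d + kr a q * kr b d * kr e c * kr f p - kr a q * kr b d * kr e p * kr f c - kr a q * kr b p * kr e c * kr f d + kr a q * kr b p *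 kr e d * kr f c) : ℤ) : ℝ) := by
    unfold eps; rw [← Int.cast_mul, L1Z]
  rw [h2]
  simp only [kr, kR, apply_ite (fun z : ℤ => (z : ℝ))]
  push_cast
  ring

/- ### eps-weighted sums and determinants -/

lemma sum_eps (f : Fin 4 → Fin 4 → Fin 4 → Fin 4 → ℝ) :
    (∑ a, ∑ b, ∑ c, ∑ d, eps a b c d * f a b c d)
      = ∑ σ : Equiv.Perm (Fin 4), ((Equiv.Perm.sign σ : ℤ) : ℝ) * f (σ 0) (σ 1) (σ 2) (σ 3) := by
  have key : ∀ t : Fin 4 × Fin 4 × Fin 4 × Fin 4,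
      eps t.1 t.2.1 t.2.2.1 t.2.2.2 * f t.1 t.2.1 t.2.2.1 t.2.2.2 ≠ 0 →
      Function.Bijective ![t.1, t.2.1, t.2.2.1, t.2.2.2] := by
    intro t h
    by_contra hb
    exact h (by rw [show eps t.1 t.2.1 t.2.2.1 t.2.2.2 = 0 by
      unfold eps; rw [epsE_zero _ _ _ _ hb]; norm_num, zero_mul])
  rw [show (∑ a, ∑ b, ∑ c, ∑ d, eps a b c d * f a b c d)
      = ∑ t : Fin 4 × Fin 4 × Fin 4 × Fin 4,
          eps t.1 t.2.1 t.2.2.1 t.2.2.2 * f t.1 t.2.1 t.2.2.1 t.2.2.2 by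
    rw [Fintype.sum_prod_type]
    exact Finset.sum_congr rfl fun a _ => by
      rw [Fintype.sum_prod_type]
      exact Finset.sum_congr rfl fun b _ => by rw [Fintype.sum_prod_type]]
  rw [eq_comm]
  apply Finset.sum_of_injOn (fun σ => (σ 0, σ 1, σ 2, σ 3))
  · intro σ _ τ _ h
    simp only [Prod.mk.injEq] at h
    ext i
    fin_cases i <;> tauto
  · intro σ _; exact Finset.mem_univ _
  · intro t _ ht
    by_contra h
    have hb := key t (by simpa using h)
    exact ht ⟨Equiv.ofBijective _ hb, by simp, rfl⟩
  · intro σ _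
    show ((Equiv.Perm.sign σ : ℤ) : ℝ) * _ = _
    rw [show eps (σ 0) (σ 1) (σ 2) (σ 3) = ((Equiv.Perm.sign σ : ℤ) : ℝ) by
      unfold eps; rw [epsE_sign]]

lemma H2 (B : Matrix (Fin 4) (Fin 4) ℝ) :
    (∑ i, ∑ j, ∑ k, ∑ l, eps i j k l * (B i 0 * B j 1 * B k 2 * B l 3)) = B.det := by
  rw [sum_eps (fun i j k l => B i 0 * B j 1 * B k 2 * B l 3), Matrix.det_apply]
  refine Finset.sum_congr rfl fun σ _ => ?_
  rw [Fin.prod_univ_four]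
  simp [Units.smul_def, zsmul_eq_mul]

lemma detB (M : Matrix (Fin 4) (Fin 4) ℝ) (c d p q : Fin 4) :
    (M.submatrix id ![c,d,p,q]).det = M.det * eps c d p q := by
  by_cases h : Function.Bijective ![c,d,p,q]
  · have : (M.submatrix id ![c,d,p,q]) = M.submatrix id (Equiv.ofBijective _ h) := rfl
    rw [this, Matrix.det_permute']
    rw [show eps c d p q = ((Equiv.Perm.sign (Equiv.ofBijective _ h) : ℤ) : ℝ) by
      unfold eps
      rw [show epsE c d p q = Equiv.Perm.sign (Equiv.ofBijective _ h) from
        epsE_sign (Equiv.ofBijective _ h)]]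
    push_cast
    ring
  · rw [show eps c d p q = 0 by unfold eps; rw [epsE_zero _ _ _ _ h]; norm_num, mul_zero]
    rcases not_bij_cases _ _ _ _ h with hh|hh|hh|hh|hh|hh <;> subst hh
    · exact Matrix.det_zero_of_column_eq (i := 0) (j := 1) (by decide) (fun k => by simp)
    · exact Matrix.det_zero_of_column_eq (i := 0) (j := 2) (by decide) (fun k => by simp)
    · exact Matrix.det_zero_of_column_eq (i := 0) (j := 3) (by decide) (fun k => by simp)
    · exact Matrix.det_zero_of_column_eq (i := 1) (j := 2) (by decide) (fun k => by simp)
    · exact Matrix.det_zero_of_column_eq (i := 1) (j := 3) (by decide) (fun k => by simp)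
    · exact Matrix.det_zero_of_column_eq (i := 2) (j := 3) (by decide) (fun k => by simp)

lemma F4 (M : Matrix (Fin 4) (Fin 4) ℝ) (c d p q : Fin 4) :
    (∑ c', ∑ d', ∑ p', ∑ q', eps c' d' p' q' * (M c' c * M d' d * M p' p * M q' q))
      = M.det * eps c d p q := by
  have := H2 (M.submatrix id ![c,d,p,q])
  simp only [Matrix.submatrix_apply, id] at this
  rw [detB] at this
  simpa using this
section helpers
variable (g M : Matrix (Fin 4) (Fin 4) ℝ)

/-- delta collapse: ∑ₖ∑ₗ (g i k * M k l) * v l = v i -/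
lemma Dlem (hgM : ∀ i j, (∑ k, g i k * M k j) = if i = j then (1:ℝ) else 0)
    (i : Fin 4) (v : Fin 4 → ℝ) :
    (∑ k, ∑ l, (g i k * M k l) * v l) = v i := by
  rw [Finset.sum_comm]
  calc (∑ l, ∑ k, (g i k * M k l) * v l)
      = ∑ l, (if i = l then (1:ℝ) else 0) * v l :=
        Finset.sum_congr rfl fun l _ => by rw [← Finset.sum_mul, hgM]
    _ = v i := by simp

/-- pull the innermost of 5 sums out -/
lemma pull4 (G : Fin 4 → Fin 4 → Fin 4 → Fin 4 → Fin 4 → ℝ) :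
    (∑ e, ∑ f, ∑ p, ∑ q, ∑ x, G e f p q x) = ∑ x, ∑ e, ∑ f, ∑ p, ∑ q, G e f p q x :=
  ((Finset.sum_congr rfl fun e _ => Finset.sum_congr rfl fun f _ =>
      Finset.sum_congr rfl fun p _ => Finset.sum_comm).trans
    ((Finset.sum_congr rfl fun e _ => Finset.sum_congr rfl fun f _ =>
      Finset.sum_comm).trans
      ((Finset.sum_congr rfl fun e _ => Finset.sum_comm).trans Finset.sum_comm)))

/-- move the 4 inner sums (of 8) out -/
lemma reorder8 (H : Fin 4 → Fin 4 → Fin 4 → Fin 4 → Fin 4 → Fin 4 → Fin 4 → Fin 4 → ℝ) :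
    (∑ e, ∑ f, ∑ p, ∑ q, ∑ e', ∑ f', ∑ c', ∑ d', H e' f' c' d' e f p q)
      = ∑ e', ∑ f', ∑ c', ∑ d', ∑ e, ∑ f, ∑ p, ∑ q, H e' f' c' d' e f p q := by
  rw [pull4 (fun e f p q e'' => ∑ f', ∑ c', ∑ d', H e'' f' c' d' e f p q)]
  refine Finset.sum_congr rfl fun e' _ => ?_
  rw [pull4 (fun e f p q f'' => ∑ c', ∑ d', H e' f'' c' d' e f p q)]
  refine Finset.sum_congr rfl fun f' _ => ?_
  rw [pull4 (fun e f p q c'' => ∑ d', H e' f' c'' d' e f p q)]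
  refine Finset.sum_congr rfl fun c' _ => ?_
  exact pull4 (fun e f p q d'' => H e' f' c' d'' e f p q)

end helpers

section Csec
variable (g M : Matrix (Fin 4) (Fin 4) ℝ)

lemma fac2 (u v : Fin 4 → ℝ) (t : ℝ) :
    (∑ x, ∑ y, u x * (v y * t)) = (∑ x, u x) * ((∑ y, v y) * t) := by
  conv_rhs => rw [Finset.sum_mul]
  refine Finset.sum_congr rfl fun x _ => ?_
  conv_rhs => rw [Finset.sum_mul, Finset.mul_sum]

lemma pull2 (G : Fin 4 → Fin 4 → Fin 4 → ℝ) :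
    (∑ a, ∑ b, ∑ x, G a b x) = ∑ x, ∑ a, ∑ b, G a b x :=
  (Finset.sum_congr rfl fun a _ => Finset.sum_comm).trans Finset.sum_comm

lemma LR (hgM : ∀ i j, (∑ k, g i k * M k j) = if i = j then (1:ℝ) else 0)
    (hgs : ∀ i j, g i j = g j i) (hMs : ∀ i j, M i j = M j i)
    (T : Fin 4 → Fin 4 → ℝ) (c d : Fin 4) :
    (∑ x, ∑ y, g x c * (g y d * (∑ i, ∑ j, M i x * (M j y * T i j)))) = T c d := by
  have step1 : (∑ x, ∑ y, g x c * (g y d * (∑ i, ∑ j, M i x * (M j y * T i j))))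
      = ∑ x, ∑ y, ∑ i, ∑ j, g x c * (g y d * (M i x * (M j y * T i j))) := by
    simp only [Finset.mul_sum]
  rw [step1]
  rw [pull2 (fun x y i => ∑ j, g x c * (g y d * (M i x * (M j y * T i j))))]
  rw [Finset.sum_congr rfl (fun i (_ : i ∈ univ) =>
    pull2 (fun x y j => g x c * (g y d * (M i x * (M j y * T i j)))))]
  calc (∑ i, ∑ j, ∑ x, ∑ y, g x c * (g y d * (M i x * (M j y * T i j))))
      = ∑ i, ∑ j, ∑ x, ∑ y, (g x c * M i x) * ((g y d * M j y) * T i j) :=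
        Finset.sum_congr rfl fun i _ => Finset.sum_congr rfl fun j _ =>
          Finset.sum_congr rfl fun x _ => Finset.sum_congr rfl fun y _ => by ring
    _ = ∑ i, ∑ j, (∑ x, g x c * M i x) * ((∑ y, g y d * M j y) * T i j) :=
        Finset.sum_congr rfl fun i _ => Finset.sum_congr rfl fun j _ =>
          fac2 _ _ _
    _ = ∑ i, ∑ j, (if c = i then (1:ℝ) else 0) * ((if d = j then (1:ℝ) else 0) * T i j) := by
        refine Finset.sum_congr rfl fun i _ => Finset.sum_congr rfl fun j _ => ?_
        rw [show (∑ x, g x c * M i x) = ∑ x, g c x * M x i from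
          Finset.sum_congr rfl fun x _ => by rw [hgs, hMs], hgM]
        rw [show (∑ y, g y d * M j y) = ∑ y, g d y * M y j from
          Finset.sum_congr rfl fun y _ => by rw [hgs, hMs], hgM]
    _ = T c d := by simp

lemma Cl (hgM : ∀ i j, (∑ k, g i k * M k j) = if i = j then (1:ℝ) else 0)
    (hgs : ∀ i j, g i j = g j i) (hMs : ∀ i j, M i j = M j i) (c d p q : Fin 4) :
    (∑ p', ∑ q', eps c d p' q' * (M p' p * M q' q))
      = M.det * ∑ c', ∑ d', g c c' * (g d d' * eps c' d' p q) := by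
  have hΦ : ∀ x y, (∑ i, ∑ j, M i x * (M j y *
      (∑ p', ∑ q', eps i j p' q' * (M p' p * M q' q)))) = M.det * eps x y p q := by
    intro x y
    calc (∑ i, ∑ j, M i x * (M j y * (∑ p', ∑ q', eps i j p' q' * (M p' p * M q' q))))
        = ∑ i, ∑ j, ∑ p', ∑ q', eps i j p' q' * (M i x * M j y * M p' p * M q' q) := by
          simp only [Finset.mul_sum]
          exact Finset.sum_congr rfl fun i _ => Finset.sum_congr rfl fun j _ =>
            Finset.sum_congr rfl fun p' _ => Finset.sum_congr rfl fun q' _ => by ring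
      _ = M.det * eps x y p q := F4 M x y p q
  calc (∑ p', ∑ q', eps c d p' q' * (M p' p * M q' q))
      = ∑ x, ∑ y, g x c * (g y d * (∑ i, ∑ j, M i x * (M j y *
          (∑ p', ∑ q', eps i j p' q' * (M p' p * M q' q))))) :=
        (LR g M hgM hgs hMs (fun i j => ∑ p', ∑ q', eps i j p' q' * (M p' p * M q' q)) c d).symm
    _ = ∑ x, ∑ y, g x c * (g y d * (M.det * eps x y p q)) :=
        Finset.sum_congr rfl fun x _ => Finset.sum_congr rfl fun y _ => by rw [hΦ]
    _ = ∑ x, ∑ y, M.det * (g c x * (g d y * eps x y p q)) :=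
        Finset.sum_congr rfl fun x _ => Finset.sum_congr rfl fun y _ => by
          rw [hgs x c, hgs y d]; ring
    _ = M.det * ∑ c', ∑ d', g c c' * (g d d' * eps c' d' p q) := by
        simp only [← Finset.mul_sum]
end Csec

section terms
variable (g M : Matrix (Fin 4) (Fin 4) ℝ) (W : Fin 4 → Fin 4 → Fin 4 → Fin 4 → ℝ)

lemma term01
    (hZ3 : ∀ u v, (∑ k, ∑ l, M k l * W u l v k) = 0)
    (hZ4 : ∀ u v, (∑ k, ∑ l, M k l * W u l k v) = 0)
    (c d a b : Fin 4) :
    (∑ e', ∑ f', ∑ e, ∑ f, M e' e * M f' f * (g c a * (g d b * W e f e' f'))) = 0 := by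
  calc ∑ e', ∑ f', ∑ e, ∑ f, M e' e * M f' f * (g c a * (g d b * W e f e' f'))
      = ∑ e', ∑ e, ∑ f', ∑ f, M e' e * M f' f * (g c a * (g d b * W e f e' f')) := Finset.sum_congr rfl fun e' _ => Finset.sum_comm
    _ = ∑ e', ∑ e, (M e' e * (g c a * g d b)) * (∑ f', ∑ f, M f' f * W e f e' f') := by
        refine Finset.sum_congr rfl fun e' _ => Finset.sum_congr rfl fun e _ => ?_
        simp only [Finset.mul_sum]
        exact Finset.sum_congr rfl fun f' _ => Finset.sum_congr rfl fun f _ => by ring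
    _ = ∑ e', ∑ e, (M e' e * (g c a * g d b)) * 0 := by
        refine Finset.sum_congr rfl fun e' _ => Finset.sum_congr rfl fun e _ => ?_
        rw [hZ3 e e']
    _ = 0 := by simp

lemma term02
    (hZ3 : ∀ u v, (∑ k, ∑ l, M k l * W u l v k) = 0)
    (hZ4 : ∀ u v, (∑ k, ∑ l, M k l * W u l k v) = 0)
    (c d a b : Fin 4) :
    (∑ e', ∑ f', ∑ e, ∑ f, M e' e * M f' f * (g c a * (g d b * W e f f' e'))) = 0 := by
  calc ∑ e', ∑ f', ∑ e, ∑ f, M e' e * M f' f * (g c a * (g d b * W e f f' e'))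
      = ∑ e', ∑ e, ∑ f', ∑ f, M e' e * M f' f * (g c a * (g d b * W e f f' e')) := Finset.sum_congr rfl fun e' _ => Finset.sum_comm
    _ = ∑ e', ∑ e, (M e' e * (g c a * g d b)) * (∑ f', ∑ f, M f' f * W e f f' e') := by
        refine Finset.sum_congr rfl fun e' _ => Finset.sum_congr rfl fun e _ => ?_
        simp only [Finset.mul_sum]
        exact Finset.sum_congr rfl fun f' _ => Finset.sum_congr rfl fun f _ => by ring
    _ = ∑ e', ∑ e, (M e' e * (g c a * g d b)) * 0 := by
        refine Finset.sum_congr rfl fun e' _ => Finset.sum_congr rfl fun e _ => ?_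
        rw [hZ4 e e']
    _ = 0 := by simp

lemma term03
    (hZ3 : ∀ u v, (∑ k, ∑ l, M k l * W u l v k) = 0)
    (hZ4 : ∀ u v, (∑ k, ∑ l, M k l * W u l k v) = 0)
    (c d a b : Fin 4) :
    (∑ e', ∑ f', ∑ e, ∑ f, M e' e * M f' f * (g c a * (g d e' * W e f b f'))) = 0 := by
  calc ∑ e', ∑ f', ∑ e, ∑ f, M e' e * M f' f * (g c a * (g d e' * W e f b f'))
      = ∑ e', ∑ e, ∑ f', ∑ f, M e' e * M f' f * (g c a * (g d e' * W e f b f')) := Finset.sum_congr rfl fun e' _ => Finset.sum_comm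
    _ = ∑ e', ∑ e, (M e' e * (g c a * g d e')) * (∑ f', ∑ f, M f' f * W e f b f') := by
        refine Finset.sum_congr rfl fun e' _ => Finset.sum_congr rfl fun e _ => ?_
        simp only [Finset.mul_sum]
        exact Finset.sum_congr rfl fun f' _ => Finset.sum_congr rfl fun f _ => by ring
    _ = ∑ e', ∑ e, (M e' e * (g c a * g d e')) * 0 := by
        refine Finset.sum_congr rfl fun e' _ => Finset.sum_congr rfl fun e _ => ?_
        rw [hZ3 e b]
    _ = 0 := by simp

lemma term04
    (hgM : ∀ i j, (∑ k, g i k * M k j) = if i = j then (1:ℝ) else 0)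
    (hZ1 : ∀ u v, (∑ k, ∑ l, M k l * W l u v k) = 0)
    (hZ2 : ∀ u v, (∑ k, ∑ l, M k l * W l u k v) = 0)
    (c d a b : Fin 4) :
    (∑ e', ∑ f', ∑ e, ∑ f, M e' e * M f' f * (g c a * (g d f' * W e f b e'))) = 0 := by
  calc ∑ e', ∑ f', ∑ e, ∑ f, M e' e * M f' f * (g c a * (g d f' * W e f b e'))
      = ∑ e', ∑ e, ∑ f', ∑ f, M e' e * M f' f * (g c a * (g d f' * W e f b e')) := Finset.sum_congr rfl fun e' _ => Finset.sum_comm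
    _ = ∑ e', ∑ e, (M e' e * g c a) * (∑ f', ∑ f, (g d f' * M f' f) * W e f b e') := by
        refine Finset.sum_congr rfl fun e' _ => Finset.sum_congr rfl fun e _ => ?_
        simp only [Finset.mul_sum]
        exact Finset.sum_congr rfl fun f' _ => Finset.sum_congr rfl fun f _ => by ring
    _ = ∑ e', ∑ e, (M e' e * g c a) * (W e d b e') := by
        refine Finset.sum_congr rfl fun e' _ => Finset.sum_congr rfl fun e _ => ?_
        rw [Dlem g M hgM d (fun l => W e l b e')]
    _ = ∑ e', ∑ e, g c a * (M e' e * W e d b e') := by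
        refine Finset.sum_congr rfl fun e' _ => Finset.sum_congr rfl fun e _ => ?_
        ring
    _ = g c a * ∑ e', ∑ e, M e' e * W e d b e' := by
        simp only [← Finset.mul_sum]
    _ = 0 := by rw [hZ1 d b, mul_zero]

lemma term05
    (hZ3 : ∀ u v, (∑ k, ∑ l, M k l * W u l v k) = 0)
    (hZ4 : ∀ u v, (∑ k, ∑ l, M k l * W u l k v) = 0)
    (c d a b : Fin 4) :
    (∑ e', ∑ f', ∑ e, ∑ f, M e' e * M f' f * (g c a * (g d e' * W e f f' b))) = 0 := by
  calc ∑ e', ∑ f', ∑ e, ∑ f, M e' e * M f' f * (g c a * (g d e' * W e f f' b))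
      = ∑ e', ∑ e, ∑ f', ∑ f, M e' e * M f' f * (g c a * (g d e' * W e f f' b)) := Finset.sum_congr rfl fun e' _ => Finset.sum_comm
    _ = ∑ e', ∑ e, (M e' e * (g c a * g d e')) * (∑ f', ∑ f, M f' f * W e f f' b) := by
        refine Finset.sum_congr rfl fun e' _ => Finset.sum_congr rfl fun e _ => ?_
        simp only [Finset.mul_sum]
        exact Finset.sum_congr rfl fun f' _ => Finset.sum_congr rfl fun f _ => by ring
    _ = ∑ e', ∑ e, (M e' e * (g c a * g d e')) * 0 := by
        refine Finset.sum_congr rfl fun e' _ => Finset.sum_congr rfl fun e _ => ?_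
        rw [hZ4 e b]
    _ = 0 := by simp

lemma term06
    (hgM : ∀ i j, (∑ k, g i k * M k j) = if i = j then (1:ℝ) else 0)
    (hZ1 : ∀ u v, (∑ k, ∑ l, M k l * W l u v k) = 0)
    (hZ2 : ∀ u v, (∑ k, ∑ l, M k l * W l u k v) = 0)
    (c d a b : Fin 4) :
    (∑ e', ∑ f', ∑ e, ∑ f, M e' e * M f' f * (g c a * (g d f' * W e f e' b))) = 0 := by
  calc ∑ e', ∑ f', ∑ e, ∑ f, M e' e * M f' f * (g c a * (g d f' * W e f e' b))
      = ∑ e', ∑ e, ∑ f', ∑ f, M e' e * M f' f * (g c a * (g d f' * W e f e' b)) := Finset.sum_congr rfl fun e' _ => Finset.sum_comm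
    _ = ∑ e', ∑ e, (M e' e * g c a) * (∑ f', ∑ f, (g d f' * M f' f) * W e f e' b) := by
        refine Finset.sum_congr rfl fun e' _ => Finset.sum_congr rfl fun e _ => ?_
        simp only [Finset.mul_sum]
        exact Finset.sum_congr rfl fun f' _ => Finset.sum_congr rfl fun f _ => by ring
    _ = ∑ e', ∑ e, (M e' e * g c a) * (W e d e' b) := by
        refine Finset.sum_congr rfl fun e' _ => Finset.sum_congr rfl fun e _ => ?_
        rw [Dlem g M hgM d (fun l => W e l e' b)]
    _ = ∑ e', ∑ e, g c a * (M e' e * W e d e' b) := by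
        refine Finset.sum_congr rfl fun e' _ => Finset.sum_congr rfl fun e _ => ?_
        ring
    _ = g c a * ∑ e', ∑ e, M e' e * W e d e' b := by
        simp only [← Finset.mul_sum]
    _ = 0 := by rw [hZ2 d b, mul_zero]

lemma term07
    (hZ3 : ∀ u v, (∑ k, ∑ l, M k l * W u l v k) = 0)
    (hZ4 : ∀ u v, (∑ k, ∑ l, M k l * W u l k v) = 0)
    (c d a b : Fin 4) :
    (∑ e', ∑ f', ∑ e, ∑ f, M e' e * M f' f * (g c b * (g d a * W e f e' f'))) = 0 := by
  calc ∑ e', ∑ f', ∑ e, ∑ f, M e' e * M f' f * (g c b * (g d a * W e f e' f'))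
      = ∑ e', ∑ e, ∑ f', ∑ f, M e' e * M f' f * (g c b * (g d a * W e f e' f')) := Finset.sum_congr rfl fun e' _ => Finset.sum_comm
    _ = ∑ e', ∑ e, (M e' e * (g c b * g d a)) * (∑ f', ∑ f, M f' f * W e f e' f') := by
        refine Finset.sum_congr rfl fun e' _ => Finset.sum_congr rfl fun e _ => ?_
        simp only [Finset.mul_sum]
        exact Finset.sum_congr rfl fun f' _ => Finset.sum_congr rfl fun f _ => by ring
    _ = ∑ e', ∑ e, (M e' e * (g c b * g d a)) * 0 := by
        refine Finset.sum_congr rfl fun e' _ => Finset.sum_congr rfl fun e _ => ?_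
        rw [hZ3 e e']
    _ = 0 := by simp

lemma term08
    (hZ3 : ∀ u v, (∑ k, ∑ l, M k l * W u l v k) = 0)
    (hZ4 : ∀ u v, (∑ k, ∑ l, M k l * W u l k v) = 0)
    (c d a b : Fin 4) :
    (∑ e', ∑ f', ∑ e, ∑ f, M e' e * M f' f * (g c b * (g d a * W e f f' e'))) = 0 := by
  calc ∑ e', ∑ f', ∑ e, ∑ f, M e' e * M f' f * (g c b * (g d a * W e f f' e'))
      = ∑ e', ∑ e, ∑ f', ∑ f, M e' e * M f' f * (g c b * (g d a * W e f f' e')) := Finset.sum_congr rfl fun e' _ => Finset.sum_comm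
    _ = ∑ e', ∑ e, (M e' e * (g c b * g d a)) * (∑ f', ∑ f, M f' f * W e f f' e') := by
        refine Finset.sum_congr rfl fun e' _ => Finset.sum_congr rfl fun e _ => ?_
        simp only [Finset.mul_sum]
        exact Finset.sum_congr rfl fun f' _ => Finset.sum_congr rfl fun f _ => by ring
    _ = ∑ e', ∑ e, (M e' e * (g c b * g d a)) * 0 := by
        refine Finset.sum_congr rfl fun e' _ => Finset.sum_congr rfl fun e _ => ?_
        rw [hZ4 e e']
    _ = 0 := by simp

lemma term09
    (hZ3 : ∀ u v, (∑ k, ∑ l, M k l * W u l v k) = 0)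
    (hZ4 : ∀ u v, (∑ k, ∑ l, M k l * W u l k v) = 0)
    (c d a b : Fin 4) :
    (∑ e', ∑ f', ∑ e, ∑ f, M e' e * M f' f * (g c e' * (g d a * W e f b f'))) = 0 := by
  calc ∑ e', ∑ f', ∑ e, ∑ f, M e' e * M f' f * (g c e' * (g d a * W e f b f'))
      = ∑ e', ∑ e, ∑ f', ∑ f, M e' e * M f' f * (g c e' * (g d a * W e f b f')) := Finset.sum_congr rfl fun e' _ => Finset.sum_comm
    _ = ∑ e', ∑ e, (M e' e * (g c e' * g d a)) * (∑ f', ∑ f, M f' f * W e f b f') := by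
        refine Finset.sum_congr rfl fun e' _ => Finset.sum_congr rfl fun e _ => ?_
        simp only [Finset.mul_sum]
        exact Finset.sum_congr rfl fun f' _ => Finset.sum_congr rfl fun f _ => by ring
    _ = ∑ e', ∑ e, (M e' e * (g c e' * g d a)) * 0 := by
        refine Finset.sum_congr rfl fun e' _ => Finset.sum_congr rfl fun e _ => ?_
        rw [hZ3 e b]
    _ = 0 := by simp

lemma term10
    (hgM : ∀ i j, (∑ k, g i k * M k j) = if i = j then (1:ℝ) else 0)
    (hZ1 : ∀ u v, (∑ k, ∑ l, M k l * W l u v k) = 0)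
    (hZ2 : ∀ u v, (∑ k, ∑ l, M k l * W l u k v) = 0)
    (c d a b : Fin 4) :
    (∑ e', ∑ f', ∑ e, ∑ f, M e' e * M f' f * (g c f' * (g d a * W e f b e'))) = 0 := by
  calc ∑ e', ∑ f', ∑ e, ∑ f, M e' e * M f' f * (g c f' * (g d a * W e f b e'))
      = ∑ e', ∑ e, ∑ f', ∑ f, M e' e * M f' f * (g c f' * (g d a * W e f b e')) := Finset.sum_congr rfl fun e' _ => Finset.sum_comm
    _ = ∑ e', ∑ e, (M e' e * g d a) * (∑ f', ∑ f, (g c f' * M f' f) * W e f b e') := by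
        refine Finset.sum_congr rfl fun e' _ => Finset.sum_congr rfl fun e _ => ?_
        simp only [Finset.mul_sum]
        exact Finset.sum_congr rfl fun f' _ => Finset.sum_congr rfl fun f _ => by ring
    _ = ∑ e', ∑ e, (M e' e * g d a) * (W e c b e') := by
        refine Finset.sum_congr rfl fun e' _ => Finset.sum_congr rfl fun e _ => ?_
        rw [Dlem g M hgM c (fun l => W e l b e')]
    _ = ∑ e', ∑ e, g d a * (M e' e * W e c b e') := by
        refine Finset.sum_congr rfl fun e' _ => Finset.sum_congr rfl fun e _ => ?_
        ring
    _ = g d a * ∑ e', ∑ e, M e' e * W e c b e' := by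
        simp only [← Finset.mul_sum]
    _ = 0 := by rw [hZ1 c b, mul_zero]

lemma term11
    (hZ3 : ∀ u v, (∑ k, ∑ l, M k l * W u l v k) = 0)
    (hZ4 : ∀ u v, (∑ k, ∑ l, M k l * W u l k v) = 0)
    (c d a b : Fin 4) :
    (∑ e', ∑ f', ∑ e, ∑ f, M e' e * M f' f * (g c e' * (g d a * W e f f' b))) = 0 := by
  calc ∑ e', ∑ f', ∑ e, ∑ f, M e' e * M f' f * (g c e' * (g d a * W e f f' b))
      = ∑ e', ∑ e, ∑ f', ∑ f, M e' e * M f' f * (g c e' * (g d a * W e f f' b)) := Finset.sum_congr rfl fun e' _ => Finset.sum_comm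
    _ = ∑ e', ∑ e, (M e' e * (g c e' * g d a)) * (∑ f', ∑ f, M f' f * W e f f' b) := by
        refine Finset.sum_congr rfl fun e' _ => Finset.sum_congr rfl fun e _ => ?_
        simp only [Finset.mul_sum]
        exact Finset.sum_congr rfl fun f' _ => Finset.sum_congr rfl fun f _ => by ring
    _ = ∑ e', ∑ e, (M e' e * (g c e' * g d a)) * 0 := by
        refine Finset.sum_congr rfl fun e' _ => Finset.sum_congr rfl fun e _ => ?_
        rw [hZ4 e b]
    _ = 0 := by simp

lemma term12
    (hgM : ∀ i j, (∑ k, g i k * M k j) = if i = j then (1:ℝ) else 0)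
    (hZ1 : ∀ u v, (∑ k, ∑ l, M k l * W l u v k) = 0)
    (hZ2 : ∀ u v, (∑ k, ∑ l, M k l * W l u k v) = 0)
    (c d a b : Fin 4) :
    (∑ e', ∑ f', ∑ e, ∑ f, M e' e * M f' f * (g c f' * (g d a * W e f e' b))) = 0 := by
  calc ∑ e', ∑ f', ∑ e, ∑ f, M e' e * M f' f * (g c f' * (g d a * W e f e' b))
      = ∑ e', ∑ e, ∑ f', ∑ f, M e' e * M f' f * (g c f' * (g d a * W e f e' b)) := Finset.sum_congr rfl fun e' _ => Finset.sum_comm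
    _ = ∑ e', ∑ e, (M e' e * g d a) * (∑ f', ∑ f, (g c f' * M f' f) * W e f e' b) := by
        refine Finset.sum_congr rfl fun e' _ => Finset.sum_congr rfl fun e _ => ?_
        simp only [Finset.mul_sum]
        exact Finset.sum_congr rfl fun f' _ => Finset.sum_congr rfl fun f _ => by ring
    _ = ∑ e', ∑ e, (M e' e * g d a) * (W e c e' b) := by
        refine Finset.sum_congr rfl fun e' _ => Finset.sum_congr rfl fun e _ => ?_
        rw [Dlem g M hgM c (fun l => W e l e' b)]
    _ = ∑ e', ∑ e, g d a * (M e' e * W e c e' b) := by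
        refine Finset.sum_congr rfl fun e' _ => Finset.sum_congr rfl fun e _ => ?_
        ring
    _ = g d a * ∑ e', ∑ e, M e' e * W e c e' b := by
        simp only [← Finset.mul_sum]
    _ = 0 := by rw [hZ2 c b, mul_zero]

lemma term13
    (hZ3 : ∀ u v, (∑ k, ∑ l, M k l * W u l v k) = 0)
    (hZ4 : ∀ u v, (∑ k, ∑ l, M k l * W u l k v) = 0)
    (c d a b : Fin 4) :
    (∑ e', ∑ f', ∑ e, ∑ f, M e' e * M f' f * (g c b * (g d e' * W e f a f'))) = 0 := by
  calc ∑ e', ∑ f', ∑ e, ∑ f, M e' e * M f' f * (g c b * (g d e' * W e f a f'))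
      = ∑ e', ∑ e, ∑ f', ∑ f, M e' e * M f' f * (g c b * (g d e' * W e f a f')) := Finset.sum_congr rfl fun e' _ => Finset.sum_comm
    _ = ∑ e', ∑ e, (M e' e * (g c b * g d e')) * (∑ f', ∑ f, M f' f * W e f a f') := by
        refine Finset.sum_congr rfl fun e' _ => Finset.sum_congr rfl fun e _ => ?_
        simp only [Finset.mul_sum]
        exact Finset.sum_congr rfl fun f' _ => Finset.sum_congr rfl fun f _ => by ring
    _ = ∑ e', ∑ e, (M e' e * (g c b * g d e')) * 0 := by
        refine Finset.sum_congr rfl fun e' _ => Finset.sum_congr rfl fun e _ => ?_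
        rw [hZ3 e a]
    _ = 0 := by simp

lemma term14
    (hgM : ∀ i j, (∑ k, g i k * M k j) = if i = j then (1:ℝ) else 0)
    (hZ1 : ∀ u v, (∑ k, ∑ l, M k l * W l u v k) = 0)
    (hZ2 : ∀ u v, (∑ k, ∑ l, M k l * W l u k v) = 0)
    (c d a b : Fin 4) :
    (∑ e', ∑ f', ∑ e, ∑ f, M e' e * M f' f * (g c b * (g d f' * W e f a e'))) = 0 := by
  calc ∑ e', ∑ f', ∑ e, ∑ f, M e' e * M f' f * (g c b * (g d f' * W e f a e'))
      = ∑ e', ∑ e, ∑ f', ∑ f, M e' e * M f' f * (g c b * (g d f' * W e f a e')) := Finset.sum_congr rfl fun e' _ => Finset.sum_comm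
    _ = ∑ e', ∑ e, (M e' e * g c b) * (∑ f', ∑ f, (g d f' * M f' f) * W e f a e') := by
        refine Finset.sum_congr rfl fun e' _ => Finset.sum_congr rfl fun e _ => ?_
        simp only [Finset.mul_sum]
        exact Finset.sum_congr rfl fun f' _ => Finset.sum_congr rfl fun f _ => by ring
    _ = ∑ e', ∑ e, (M e' e * g c b) * (W e d a e') := by
        refine Finset.sum_congr rfl fun e' _ => Finset.sum_congr rfl fun e _ => ?_
        rw [Dlem g M hgM d (fun l => W e l a e')]
    _ = ∑ e', ∑ e, g c b * (M e' e * W e d a e') := by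
        refine Finset.sum_congr rfl fun e' _ => Finset.sum_congr rfl fun e _ => ?_
        ring
    _ = g c b * ∑ e', ∑ e, M e' e * W e d a e' := by
        simp only [← Finset.mul_sum]
    _ = 0 := by rw [hZ1 d a, mul_zero]

lemma term15
    (hZ3 : ∀ u v, (∑ k, ∑ l, M k l * W u l v k) = 0)
    (hZ4 : ∀ u v, (∑ k, ∑ l, M k l * W u l k v) = 0)
    (c d a b : Fin 4) :
    (∑ e', ∑ f', ∑ e, ∑ f, M e' e * M f' f * (g c e' * (g d b * W e f a f'))) = 0 := by
  calc ∑ e', ∑ f', ∑ e, ∑ f, M e' e * M f' f * (g c e' * (g d b * W e f a f'))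
      = ∑ e', ∑ e, ∑ f', ∑ f, M e' e * M f' f * (g c e' * (g d b * W e f a f')) := Finset.sum_congr rfl fun e' _ => Finset.sum_comm
    _ = ∑ e', ∑ e, (M e' e * (g c e' * g d b)) * (∑ f', ∑ f, M f' f * W e f a f') := by
        refine Finset.sum_congr rfl fun e' _ => Finset.sum_congr rfl fun e _ => ?_
        simp only [Finset.mul_sum]
        exact Finset.sum_congr rfl fun f' _ => Finset.sum_congr rfl fun f _ => by ring
    _ = ∑ e', ∑ e, (M e' e * (g c e' * g d b)) * 0 := by
        refine Finset.sum_congr rfl fun e' _ => Finset.sum_congr rfl fun e _ => ?_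
        rw [hZ3 e a]
    _ = 0 := by simp

lemma term16
    (hgM : ∀ i j, (∑ k, g i k * M k j) = if i = j then (1:ℝ) else 0)
    (hZ1 : ∀ u v, (∑ k, ∑ l, M k l * W l u v k) = 0)
    (hZ2 : ∀ u v, (∑ k, ∑ l, M k l * W l u k v) = 0)
    (c d a b : Fin 4) :
    (∑ e', ∑ f', ∑ e, ∑ f, M e' e * M f' f * (g c f' * (g d b * W e f a e'))) = 0 := by
  calc ∑ e', ∑ f', ∑ e, ∑ f, M e' e * M f' f * (g c f' * (g d b * W e f a e'))
      = ∑ e', ∑ e, ∑ f', ∑ f, M e' e * M f' f * (g c f' * (g d b * W e f a e')) := Finset.sum_congr rfl fun e' _ => Finset.sum_comm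
    _ = ∑ e', ∑ e, (M e' e * g d b) * (∑ f', ∑ f, (g c f' * M f' f) * W e f a e') := by
        refine Finset.sum_congr rfl fun e' _ => Finset.sum_congr rfl fun e _ => ?_
        simp only [Finset.mul_sum]
        exact Finset.sum_congr rfl fun f' _ => Finset.sum_congr rfl fun f _ => by ring
    _ = ∑ e', ∑ e, (M e' e * g d b) * (W e c a e') := by
        refine Finset.sum_congr rfl fun e' _ => Finset.sum_congr rfl fun e _ => ?_
        rw [Dlem g M hgM c (fun l => W e l a e')]
    _ = ∑ e', ∑ e, g d b * (M e' e * W e c a e') := by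
        refine Finset.sum_congr rfl fun e' _ => Finset.sum_congr rfl fun e _ => ?_
        ring
    _ = g d b * ∑ e', ∑ e, M e' e * W e c a e' := by
        simp only [← Finset.mul_sum]
    _ = 0 := by rw [hZ1 c a, mul_zero]

lemma term17
    (hgM : ∀ i j, (∑ k, g i k * M k j) = if i = j then (1:ℝ) else 0)
    (c d a b : Fin 4) :
    (∑ e', ∑ f', ∑ e, ∑ f, M e' e * M f' f * (g c e' * (g d f' * W e f a b))) = W c d a b := by
  calc ∑ e', ∑ f', ∑ e, ∑ f, M e' e * M f' f * (g c e' * (g d f' * W e f a b))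
      = ∑ e', ∑ e, ∑ f', ∑ f, M e' e * M f' f * (g c e' * (g d f' * W e f a b)) := Finset.sum_congr rfl fun e' _ => Finset.sum_comm
    _ = ∑ e', ∑ e, (M e' e * g c e') * (∑ f', ∑ f, (g d f' * M f' f) * W e f a b) := by
        refine Finset.sum_congr rfl fun e' _ => Finset.sum_congr rfl fun e _ => ?_
        simp only [Finset.mul_sum]
        exact Finset.sum_congr rfl fun f' _ => Finset.sum_congr rfl fun f _ => by ring
    _ = ∑ e', ∑ e, (M e' e * g c e') * (W e d a b) := by
        refine Finset.sum_congr rfl fun e' _ => Finset.sum_congr rfl fun e _ => ?_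
        rw [Dlem g M hgM d (fun l => W e l a b)]
    _ = ∑ e', ∑ e, (g c e' * M e' e) * W e d a b := by
        refine Finset.sum_congr rfl fun e' _ => Finset.sum_congr rfl fun e _ => ?_
        ring
    _ = W c d a b := Dlem g M hgM c (fun l => W l d a b)

lemma term18
    (hgM : ∀ i j, (∑ k, g i k * M k j) = if i = j then (1:ℝ) else 0)
    (c d a b : Fin 4) :
    (∑ e', ∑ f', ∑ e, ∑ f, M e' e * M f' f * (g c f' * (g d e' * W e f a b))) = W d c a b := by
  calc ∑ e', ∑ f', ∑ e, ∑ f, M e' e * M f' f * (g c f' * (g d e' * W e f a b))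
      = ∑ e', ∑ e, ∑ f', ∑ f, M e' e * M f' f * (g c f' * (g d e' * W e f a b)) := Finset.sum_congr rfl fun e' _ => Finset.sum_comm
    _ = ∑ e', ∑ e, (M e' e * g d e') * (∑ f', ∑ f, (g c f' * M f' f) * W e f a b) := by
        refine Finset.sum_congr rfl fun e' _ => Finset.sum_congr rfl fun e _ => ?_
        simp only [Finset.mul_sum]
        exact Finset.sum_congr rfl fun f' _ => Finset.sum_congr rfl fun f _ => by ring
    _ = ∑ e', ∑ e, (M e' e * g d e') * (W e c a b) := by
        refine Finset.sum_congr rfl fun e' _ => Finset.sum_congr rfl fun e _ => ?_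
        rw [Dlem g M hgM c (fun l => W e l a b)]
    _ = ∑ e', ∑ e, (g d e' * M e' e) * W e c a b := by
        refine Finset.sum_congr rfl fun e' _ => Finset.sum_congr rfl fun e _ => ?_
        ring
    _ = W d c a b := Dlem g M hgM d (fun l => W l c a b)

lemma term19
    (hZ3 : ∀ u v, (∑ k, ∑ l, M k l * W u l v k) = 0)
    (hZ4 : ∀ u v, (∑ k, ∑ l, M k l * W u l k v) = 0)
    (c d a b : Fin 4) :
    (∑ e', ∑ f', ∑ e, ∑ f, M e' e * M f' f * (g c b * (g d e' * W e f f' a))) = 0 := by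
  calc ∑ e', ∑ f', ∑ e, ∑ f, M e' e * M f' f * (g c b * (g d e' * W e f f' a))
      = ∑ e', ∑ e, ∑ f', ∑ f, M e' e * M f' f * (g c b * (g d e' * W e f f' a)) := Finset.sum_congr rfl fun e' _ => Finset.sum_comm
    _ = ∑ e', ∑ e, (M e' e * (g c b * g d e')) * (∑ f', ∑ f, M f' f * W e f f' a) := by
        refine Finset.sum_congr rfl fun e' _ => Finset.sum_congr rfl fun e _ => ?_
        simp only [Finset.mul_sum]
        exact Finset.sum_congr rfl fun f' _ => Finset.sum_congr rfl fun f _ => by ring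
    _ = ∑ e', ∑ e, (M e' e * (g c b * g d e')) * 0 := by
        refine Finset.sum_congr rfl fun e' _ => Finset.sum_congr rfl fun e _ => ?_
        rw [hZ4 e a]
    _ = 0 := by simp

lemma term20
    (hgM : ∀ i j, (∑ k, g i k * M k j) = if i = j then (1:ℝ) else 0)
    (hZ1 : ∀ u v, (∑ k, ∑ l, M k l * W l u v k) = 0)
    (hZ2 : ∀ u v, (∑ k, ∑ l, M k l * W l u k v) = 0)
    (c d a b : Fin 4) :
    (∑ e', ∑ f', ∑ e, ∑ f, M e' e * M f' f * (g c b * (g d f' * W e f e' a))) = 0 := by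
  calc ∑ e', ∑ f', ∑ e, ∑ f, M e' e * M f' f * (g c b * (g d f' * W e f e' a))
      = ∑ e', ∑ e, ∑ f', ∑ f, M e' e * M f' f * (g c b * (g d f' * W e f e' a)) := Finset.sum_congr rfl fun e' _ => Finset.sum_comm
    _ = ∑ e', ∑ e, (M e' e * g c b) * (∑ f', ∑ f, (g d f' * M f' f) * W e f e' a) := by
        refine Finset.sum_congr rfl fun e' _ => Finset.sum_congr rfl fun e _ => ?_
        simp only [Finset.mul_sum]
        exact Finset.sum_congr rfl fun f' _ => Finset.sum_congr rfl fun f _ => by ring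
    _ = ∑ e', ∑ e, (M e' e * g c b) * (W e d e' a) := by
        refine Finset.sum_congr rfl fun e' _ => Finset.sum_congr rfl fun e _ => ?_
        rw [Dlem g M hgM d (fun l => W e l e' a)]
    _ = ∑ e', ∑ e, g c b * (M e' e * W e d e' a) := by
        refine Finset.sum_congr rfl fun e' _ => Finset.sum_congr rfl fun e _ => ?_
        ring
    _ = g c b * ∑ e', ∑ e, M e' e * W e d e' a := by
        simp only [← Finset.mul_sum]
    _ = 0 := by rw [hZ2 d a, mul_zero]

lemma term21
    (hZ3 : ∀ u v, (∑ k, ∑ l, M k l * W u l v k) = 0)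
    (hZ4 : ∀ u v, (∑ k, ∑ l, M k l * W u l k v) = 0)
    (c d a b : Fin 4) :
    (∑ e', ∑ f', ∑ e, ∑ f, M e' e * M f' f * (g c e' * (g d b * W e f f' a))) = 0 := by
  calc ∑ e', ∑ f', ∑ e, ∑ f, M e' e * M f' f * (g c e' * (g d b * W e f f' a))
      = ∑ e', ∑ e, ∑ f', ∑ f, M e' e * M f' f * (g c e' * (g d b * W e f f' a)) := Finset.sum_congr rfl fun e' _ => Finset.sum_comm
    _ = ∑ e', ∑ e, (M e' e * (g c e' * g d b)) * (∑ f', ∑ f, M f' f * W e f f' a) := by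
        refine Finset.sum_congr rfl fun e' _ => Finset.sum_congr rfl fun e _ => ?_
        simp only [Finset.mul_sum]
        exact Finset.sum_congr rfl fun f' _ => Finset.sum_congr rfl fun f _ => by ring
    _ = ∑ e', ∑ e, (M e' e * (g c e' * g d b)) * 0 := by
        refine Finset.sum_congr rfl fun e' _ => Finset.sum_congr rfl fun e _ => ?_
        rw [hZ4 e a]
    _ = 0 := by simp

lemma term22
    (hgM : ∀ i j, (∑ k, g i k * M k j) = if i = j then (1:ℝ) else 0)
    (hZ1 : ∀ u v, (∑ k, ∑ l, M k l * W l u v k) = 0)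
    (hZ2 : ∀ u v, (∑ k, ∑ l, M k l * W l u k v) = 0)
    (c d a b : Fin 4) :
    (∑ e', ∑ f', ∑ e, ∑ f, M e' e * M f' f * (g c f' * (g d b * W e f e' a))) = 0 := by
  calc ∑ e', ∑ f', ∑ e, ∑ f, M e' e * M f' f * (g c f' * (g d b * W e f e' a))
      = ∑ e', ∑ e, ∑ f', ∑ f, M e' e * M f' f * (g c f' * (g d b * W e f e' a)) := Finset.sum_congr rfl fun e' _ => Finset.sum_comm
    _ = ∑ e', ∑ e, (M e' e * g d b) * (∑ f', ∑ f, (g c f' * M f' f) * W e f e' a) := by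
        refine Finset.sum_congr rfl fun e' _ => Finset.sum_congr rfl fun e _ => ?_
        simp only [Finset.mul_sum]
        exact Finset.sum_congr rfl fun f' _ => Finset.sum_congr rfl fun f _ => by ring
    _ = ∑ e', ∑ e, (M e' e * g d b) * (W e c e' a) := by
        refine Finset.sum_congr rfl fun e' _ => Finset.sum_congr rfl fun e _ => ?_
        rw [Dlem g M hgM c (fun l => W e l e' a)]
    _ = ∑ e', ∑ e, g d b * (M e' e * W e c e' a) := by
        refine Finset.sum_congr rfl fun e' _ => Finset.sum_congr rfl fun e _ => ?_
        ring
    _ = g d b * ∑ e', ∑ e, M e' e * W e c e' a := by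
        simp only [← Finset.mul_sum]
    _ = 0 := by rw [hZ2 c a, mul_zero]

lemma term23
    (hgM : ∀ i j, (∑ k, g i k * M k j) = if i = j then (1:ℝ) else 0)
    (c d a b : Fin 4) :
    (∑ e', ∑ f', ∑ e, ∑ f, M e' e * M f' f * (g c e' * (g d f' * W e f b a))) = W c d b a := by
  calc ∑ e', ∑ f', ∑ e, ∑ f, M e' e * M f' f * (g c e' * (g d f' * W e f b a))
      = ∑ e', ∑ e, ∑ f', ∑ f, M e' e * M f' f * (g c e' * (g d f' * W e f b a)) := Finset.sum_congr rfl fun e' _ => Finset.sum_comm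
    _ = ∑ e', ∑ e, (M e' e * g c e') * (∑ f', ∑ f, (g d f' * M f' f) * W e f b a) := by
        refine Finset.sum_congr rfl fun e' _ => Finset.sum_congr rfl fun e _ => ?_
        simp only [Finset.mul_sum]
        exact Finset.sum_congr rfl fun f' _ => Finset.sum_congr rfl fun f _ => by ring
    _ = ∑ e', ∑ e, (M e' e * g c e') * (W e d b a) := by
        refine Finset.sum_congr rfl fun e' _ => Finset.sum_congr rfl fun e _ => ?_
        rw [Dlem g M hgM d (fun l => W e l b a)]
    _ = ∑ e', ∑ e, (g c e' * M e' e) * W e d b a := by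
        refine Finset.sum_congr rfl fun e' _ => Finset.sum_congr rfl fun e _ => ?_
        ring
    _ = W c d b a := Dlem g M hgM c (fun l => W l d b a)

lemma term24
    (hgM : ∀ i j, (∑ k, g i k * M k j) = if i = j then (1:ℝ) else 0)
    (c d a b : Fin 4) :
    (∑ e', ∑ f', ∑ e, ∑ f, M e' e * M f' f * (g c f' * (g d e' * W e f b a))) = W d c b a := by
  calc ∑ e', ∑ f', ∑ e, ∑ f, M e' e * M f' f * (g c f' * (g d e' * W e f b a))
      = ∑ e', ∑ e, ∑ f', ∑ f, M e' e * M f' f * (g c f' * (g d e' * W e f b a)) := Finset.sum_congr rfl fun e' _ => Finset.sum_comm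
    _ = ∑ e', ∑ e, (M e' e * g d e') * (∑ f', ∑ f, (g c f' * M f' f) * W e f b a) := by
        refine Finset.sum_congr rfl fun e' _ => Finset.sum_congr rfl fun e _ => ?_
        simp only [Finset.mul_sum]
        exact Finset.sum_congr rfl fun f' _ => Finset.sum_congr rfl fun f _ => by ring
    _ = ∑ e', ∑ e, (M e' e * g d e') * (W e c b a) := by
        refine Finset.sum_congr rfl fun e' _ => Finset.sum_congr rfl fun e _ => ?_
        rw [Dlem g M hgM c (fun l => W e l b a)]
    _ = ∑ e', ∑ e, (g d e' * M e' e) * W e c b a := by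
        refine Finset.sum_congr rfl fun e' _ => Finset.sum_congr rfl fun e _ => ?_
        ring
    _ = W d c b a := Dlem g M hgM d (fun l => W l c b a)

end terms

set_option maxHeartbeats 4000000 in
lemma CORE (g M : Matrix (Fin 4) (Fin 4) ℝ) (W : Fin 4 → Fin 4 → Fin 4 → Fin 4 → ℝ)
    (hgM : ∀ i j, (∑ k, g i k * M k j) = if i = j then (1:ℝ) else 0)
    (hZ1 : ∀ u v, (∑ k, ∑ l, M k l * W l u v k) = 0)
    (hZ2 : ∀ u v, (∑ k, ∑ l, M k l * W l u k v) = 0)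
    (hZ3 : ∀ u v, (∑ k, ∑ l, M k l * W u l v k) = 0)
    (hZ4 : ∀ u v, (∑ k, ∑ l, M k l * W u l k v) = 0)
    (hA1 : ∀ a b c d, W b a c d = - W a b c d)
    (hA2 : ∀ a b c d, W a b d c = - W a b c d)
    (hPair : ∀ a b c d, W a b c d = W c d a b)
    (a b c d : Fin 4) :
    (∑ e', ∑ f', ∑ c', ∑ d', ∑ e, ∑ f, ∑ p, ∑ q,
      eps a b e' f' * eps c' d' p q *
        (M e' e * M f' f * (g c c' * (g d d' * W e f p q)))) = 4 * W a b c d := by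
  simp only [L1R]
  simp only [add_mul, sub_mul]
  simp (config := { maxSteps := 10000000 }) only [kR, mul_ite, ite_mul, one_mul, mul_one,
    zero_mul, mul_zero, Finset.sum_ite_irrel, Finset.sum_const_zero, Finset.sum_ite_eq,
    Finset.sum_ite_eq', Finset.mem_univ, if_true, Finset.sum_add_distrib,
    Finset.sum_sub_distrib, add_zero, zero_add, sub_zero, zero_sub]
  rw [term01 g M W hZ3 hZ4 c d a b,
    term02 g M W hZ3 hZ4 c d a b,
    term03 g M W hZ3 hZ4 c d a b,
    term04 g M W hgM hZ1 hZ2 c d a b,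
    term05 g M W hZ3 hZ4 c d a b,
    term06 g M W hgM hZ1 hZ2 c d a b,
    term07 g M W hZ3 hZ4 c d a b,
    term08 g M W hZ3 hZ4 c d a b,
    term09 g M W hZ3 hZ4 c d a b,
    term10 g M W hgM hZ1 hZ2 c d a b,
    term11 g M W hZ3 hZ4 c d a b,
    term12 g M W hgM hZ1 hZ2 c d a b,
    term13 g M W hZ3 hZ4 c d a b,
    term14 g M W hgM hZ1 hZ2 c d a b,
    term15 g M W hZ3 hZ4 c d a b,
    term16 g M W hgM hZ1 hZ2 c d a b,
    term17 g M W hgM c d a b,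
    term18 g M W hgM c d a b,
    term19 g M W hZ3 hZ4 c d a b,
    term20 g M W hgM hZ1 hZ2 c d a b,
    term21 g M W hZ3 hZ4 c d a b,
    term22 g M W hgM hZ1 hZ2 c d a b,
    term23 g M W hgM c d a b,
    term24 g M W hgM c d a b]
  linear_combination (-4 : ℝ) * hPair a b c d - hA1 c d a b - 2 * hA2 c d a b + hA1 c d b a

/- ### main theorem -/

set_option maxHeartbeats 1000000 in
/-- in 4 dimensions, for any traceless double (2,2)-form `W` with the Weyl
candidate symmetries, the double Hodge dual
`(*W*)_{abcd} = (1/4) η_{ab}{}^{ef} η_{cd}{}^{gh} W_{efgh}` equals `ε·W_{abcd}`, where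
`ε = sign (det g)`. -/
theorem double_dual_of_weyl_candidate
    (g : Matrix (Fin 4) (Fin 4) ℝ) (hsym : g.IsSymm) (hg : IsUnit g.det)
    (ε : ℝ) (hε : ε = if 0 < g.det then 1 else -1)
    (W : Fin 4 → Fin 4 → Fin 4 → Fin 4 → ℝ)
    (hA1 : ∀ a b c d, W b a c d = - W a b c d)
    (hA2 : ∀ a b c d, W a b d c = - W a b c d)
    (hPair : ∀ a b c d, W a b c d = W c d a b)
    (hBianchi : ∀ a b c d, W a b c d + W a c d b + W a d b c = 0)
    (htr : ∀ b c, ∑ a, ∑ d, g⁻¹ a d * W a b c d = 0) :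
    ∀ a b c d,
      (1/4) * ∑ e, ∑ f, ∑ p, ∑ q,
        volUp2 g a b e f * volUp2 g c d p q * W e f p q = ε * W a b c d := by
  intro a b c d
  have hdet : g.det ≠ 0 := hg.ne_zero
  have hgM : ∀ i j, (∑ k, g i k * g⁻¹ k j) = if i = j then (1:ℝ) else 0 := by
    intro i j
    rw [← Matrix.mul_apply, Matrix.mul_nonsing_inv g hg, Matrix.one_apply]
  have hgs : ∀ i j, g i j = g j i := by
    intro i j
    conv_lhs => rw [← hsym]
    exact Matrix.transpose_apply g i j
  have hMt : Matrix.transpose g⁻¹ = g⁻¹ := by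
    rw [Matrix.transpose_nonsing_inv, hsym]
  have hMs : ∀ i j, g⁻¹ i j = g⁻¹ j i := by
    intro i j
    conv_lhs => rw [← hMt]
    exact Matrix.transpose_apply g⁻¹ i j
  have hZ1 : ∀ u v, (∑ k, ∑ l, g⁻¹ k l * W l u v k) = 0 := by
    intro u v
    calc (∑ k, ∑ l, g⁻¹ k l * W l u v k)
        = ∑ k, ∑ l, g⁻¹ l k * W l u v k :=
          Finset.sum_congr rfl fun k _ => Finset.sum_congr rfl fun l _ => by rw [hMs k l]
      _ = ∑ l, ∑ k, g⁻¹ l k * W l u v k := Finset.sum_comm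
      _ = 0 := htr u v
  have hZ2 : ∀ u v, (∑ k, ∑ l, g⁻¹ k l * W l u k v) = 0 := by
    intro u v
    calc (∑ k, ∑ l, g⁻¹ k l * W l u k v)
        = ∑ k, ∑ l, -(g⁻¹ k l * W l u v k) :=
          Finset.sum_congr rfl fun k _ => Finset.sum_congr rfl fun l _ => by
            rw [hA2 l u v k]; ring
      _ = -(∑ k, ∑ l, g⁻¹ k l * W l u v k) := by
          simp only [Finset.sum_neg_distrib]
      _ = 0 := by rw [hZ1 u v, neg_zero]
  have hZ3 : ∀ u v, (∑ k, ∑ l, g⁻¹ k l * W u l v k) = 0 := by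
    intro u v
    calc (∑ k, ∑ l, g⁻¹ k l * W u l v k)
        = ∑ k, ∑ l, -(g⁻¹ k l * W l u v k) :=
          Finset.sum_congr rfl fun k _ => Finset.sum_congr rfl fun l _ => by
            rw [hA1 l u v k]; ring
      _ = -(∑ k, ∑ l, g⁻¹ k l * W l u v k) := by
          simp only [Finset.sum_neg_distrib]
      _ = 0 := by rw [hZ1 u v, neg_zero]
  have hZ4 : ∀ u v, (∑ k, ∑ l, g⁻¹ k l * W u l k v) = 0 := by
    intro u v
    calc (∑ k, ∑ l, g⁻¹ k l * W u l k v)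
        = ∑ k, ∑ l, g⁻¹ k l * W l u v k :=
          Finset.sum_congr rfl fun k _ => Finset.sum_congr rfl fun l _ => by
            rw [hA2 u l v k, hA1 l u v k]; ring
      _ = 0 := hZ1 u v
  have core := CORE g g⁻¹ W hgM hZ1 hZ2 hZ3 hZ4 hA1 hA2 hPair a b c d
  have hv1 : ∀ x y e f, volUp2 g x y e f
      = Real.sqrt |g.det| * ∑ e', ∑ f', eps x y e' f' * (g⁻¹ e' e * g⁻¹ f' f) := by
    intro x y e f
    calc volUp2 g x y e f
        = ∑ e', ∑ f', g⁻¹ e' e * g⁻¹ f' f * (Real.sqrt |g.det| * leviCivita x y e' f') := rfl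
      _ = ∑ e', ∑ f', Real.sqrt |g.det| * (eps x y e' f' * (g⁻¹ e' e * g⁻¹ f' f)) :=
          Finset.sum_congr rfl fun e' _ => Finset.sum_congr rfl fun f' _ => by
            rw [leviCivita_eq]; ring
      _ = Real.sqrt |g.det| * ∑ e', ∑ f', eps x y e' f' * (g⁻¹ e' e * g⁻¹ f' f) := by
          simp only [← Finset.mul_sum]
  have hv2 : ∀ p q, volUp2 g c d p q = Real.sqrt |g.det| *
      (g⁻¹.det * ∑ c', ∑ d', g c c' * (g d d' * eps c' d' p q)) := by
    intro p q
    rw [hv1 c d p q, Cl g g⁻¹ hgM hgs hMs c d p q]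
  have hdist : ∀ (A B : Fin 4 → Fin 4 → ℝ) (C : ℝ),
      (∑ e', ∑ f', A e' f') * ((∑ c', ∑ d', B c' d') * C)
        = ∑ e', ∑ f', ∑ c', ∑ d', A e' f' * (B c' d' * C) := by
    intro A B C
    rw [Finset.sum_mul]
    refine Finset.sum_congr rfl fun e' _ => ?_
    rw [Finset.sum_mul]
    refine Finset.sum_congr rfl fun f' _ => ?_
    rw [Finset.sum_mul, Finset.mul_sum]
    refine Finset.sum_congr rfl fun c' _ => ?_
    rw [Finset.sum_mul, Finset.mul_sum]
  have hpre : Real.sqrt |g.det| * Real.sqrt |g.det| * g⁻¹.det = ε := by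
    rw [Real.mul_self_sqrt (abs_nonneg _), Matrix.det_nonsing_inv, Ring.inverse_eq_inv', hε]
    by_cases hpos : 0 < g.det
    · rw [if_pos hpos, abs_of_pos hpos, mul_inv_cancel₀ hdet]
    · rw [if_neg hpos, abs_of_neg (lt_of_le_of_ne (le_of_not_gt hpos) hdet), neg_mul,
        mul_inv_cancel₀ hdet]
  calc (1/4) * ∑ e, ∑ f, ∑ p, ∑ q, volUp2 g a b e f * volUp2 g c d p q * W e f p q
      = (1/4) * ∑ e, ∑ f, ∑ p, ∑ q, (Real.sqrt |g.det| * Real.sqrt |g.det| * g⁻¹.det) *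
          ((∑ e', ∑ f', eps a b e' f' * (g⁻¹ e' e * g⁻¹ f' f)) *
           ((∑ c', ∑ d', g c c' * (g d d' * eps c' d' p q)) * W e f p q)) := by
        refine congrArg _ ?_
        refine Finset.sum_congr rfl fun e _ => Finset.sum_congr rfl fun f _ =>
          Finset.sum_congr rfl fun p _ => Finset.sum_congr rfl fun q _ => ?_
        rw [hv1 a b e f, hv2 p q]; ring
    _ = (1/4) * ((Real.sqrt |g.det| * Real.sqrt |g.det| * g⁻¹.det) *
          ∑ e, ∑ f, ∑ p, ∑ q,
            (∑ e', ∑ f', eps a b e' f' * (g⁻¹ e' e * g⁻¹ f' f)) *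
            ((∑ c', ∑ d', g c c' * (g d d' * eps c' d' p q)) * W e f p q)) := by
        simp only [← Finset.mul_sum]
    _ = (1/4) * ((Real.sqrt |g.det| * Real.sqrt |g.det| * g⁻¹.det) *
          ∑ e', ∑ f', ∑ c', ∑ d', ∑ e, ∑ f, ∑ p, ∑ q,
            eps a b e' f' * eps c' d' p q *
              (g⁻¹ e' e * g⁻¹ f' f * (g c c' * (g d d' * W e f p q)))) := by
        refine congrArg _ (congrArg _ ?_)
        calc (∑ e, ∑ f, ∑ p, ∑ q,
                (∑ e', ∑ f', eps a b e' f' * (g⁻¹ e' e * g⁻¹ f' f)) *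
                ((∑ c', ∑ d', g c c' * (g d d' * eps c' d' p q)) * W e f p q))
            = ∑ e, ∑ f, ∑ p, ∑ q, ∑ e', ∑ f', ∑ c', ∑ d',
                (eps a b e' f' * (g⁻¹ e' e * g⁻¹ f' f)) *
                ((g c c' * (g d d' * eps c' d' p q)) * W e f p q) :=
              Finset.sum_congr rfl fun e _ => Finset.sum_congr rfl fun f _ =>
                Finset.sum_congr rfl fun p _ => Finset.sum_congr rfl fun q _ =>
                  hdist _ _ _
          _ = ∑ e', ∑ f', ∑ c', ∑ d', ∑ e, ∑ f, ∑ p, ∑ q,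
                (eps a b e' f' * (g⁻¹ e' e * g⁻¹ f' f)) *
                ((g c c' * (g d d' * eps c' d' p q)) * W e f p q) :=
              reorder8 (fun e' f' c' d' e f p q =>
                (eps a b e' f' * (g⁻¹ e' e * g⁻¹ f' f)) *
                ((g c c' * (g d d' * eps c' d' p q)) * W e f p q))
          _ = ∑ e', ∑ f', ∑ c', ∑ d', ∑ e, ∑ f, ∑ p, ∑ q,
                eps a b e' f' * eps c' d' p q *
                  (g⁻¹ e' e * g⁻¹ f' f * (g c c' * (g d d' * W e f p q))) :=
              Finset.sum_congr rfl fun e' _ => Finset.sum_congr rfl fun f' _ =>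
                Finset.sum_congr rfl fun c' _ => Finset.sum_congr rfl fun d' _ =>
                  Finset.sum_congr rfl fun e _ => Finset.sum_congr rfl fun f _ =>
                    Finset.sum_congr rfl fun p _ => Finset.sum_congr rfl fun q _ => by ring
    _ = (1/4) * ((Real.sqrt |g.det| * Real.sqrt |g.det| * g⁻¹.det) * (4 * W a b c d)) := by
        rw [core]
    _ = ε * W a b c d := by rw [hpre]; ring
end

section
/- Define, for a 3-tensor H_{abc} antisymmetric in (a,b) on an n-dimensional vector space (n ≥ 3), with H_{[abc]}=0 and H_{ab}{}^{b}=0, and a 'formal derivative' D (a linear map assigning to H a 4-tensor H_{abc;d} with no a priori symmetry), the expression W^{ab}{}_{cd} := 2H^{ab}{}_{[c;d]} + 2H_{cd}{}^{[a;b]} − (4/(n−2)) δ^{[a}_{[c}(H^{b]e}{}_{d];e} + H_{d]e}{}^{b];e}). Then W is antisymmetric in (a,b) and in (c,d), satisfies pair symmetry W_{abcd} = W_{cdab}, and is trace-free: the g-trace of W over the first and third indices vanishes, W^{ab}{}_{ad} = 0. -/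
open Matrix in
private lemma aux_inv_symm {n : ℕ} (g : Matrix (Fin n) (Fin n) ℝ) (hsym : g.IsSymm)
    (i j : Fin n) : g⁻¹ i j = g⁻¹ j i := by
  have h : (g⁻¹)ᵀ = g⁻¹ := by rw [Matrix.transpose_nonsing_inv, hsym.eq]
  exact congrFun (congrFun h.symm i) j

open Finset in
/-- for a Lanczos candidate `H_{abc}` with formal derivative data
`DH = H_{abc;d}` (an arbitrary 4-tensor inheriting the algebraic properties of `H` in its
first three indices: antisymmetry in `(a,b)`, cyclic-freeness and `g`-tracelessness), the
generalized Lanczos expression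
`W^{ab}{}_{cd} = 2H^{ab}{}_{[c;d]} + 2H_{cd}{}^{[a;b]} − (4/(n−2)) δ^{[a}_{[c}(H^{b]e}{}_{d];e} + H_{d]e}{}^{b];e})`
(written here with all indices lowered, with `S_{bd} = g^{ee'}(DH_{bede'} + DH_{debe'})`
the trace part) is antisymmetric in `(a,b)` and `(c,d)`, pair symmetric, and `g`-traceless
over its first and third indices. -/
theorem generalized_lanczos_formula_is_weyl_candidate (n : ℕ) (hn : 3 ≤ n)
    (g : Matrix (Fin n) (Fin n) ℝ) (hsym : g.IsSymm) (hg : IsUnit g.det)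
    (DH : Fin n → Fin n → Fin n → Fin n → ℝ)
    (hDH1 : ∀ a b c d, DH b a c d = - DH a b c d)
    (hDH2 : ∀ a b c d, DH a b c d + DH b c a d + DH c a b d = 0)
    (hDH3 : ∀ a d, ∑ b, ∑ c, g⁻¹ b c * DH a b c d = 0)
    (S : Fin n → Fin n → ℝ)
    (hS : ∀ b d, S b d = ∑ e, ∑ e', g⁻¹ e e' * (DH b e d e' + DH d e b e'))
    (W : Fin n → Fin n → Fin n → Fin n → ℝ)
    (hW : ∀ a b c d, W a b c d =
      (DH a b c d - DH a b d c) + (DH c d a b - DH c d b a)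
        - (4/((n:ℝ) - 2)) * (1/4) *
            (g a c * S b d - g a d * S b c - g b c * S a d + g b d * S a c)) :
    (∀ a b c d, W b a c d = - W a b c d) ∧
    (∀ a b c d, W a b d c = - W a b c d) ∧
    (∀ a b c d, W a b c d = W c d a b) ∧
    (∀ b d, ∑ a, ∑ c, g⁻¹ a c * W a b c d = 0) := by
  have hgsym : ∀ i j, g i j = g j i := fun i j => (hsym.apply j i)
  have hGsym : ∀ i j, g⁻¹ i j = g⁻¹ j i := aux_inv_symm g hsym
  have hSsym : ∀ b d, S b d = S d b := by
    intro b d; rw [hS, hS]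
    exact Finset.sum_congr rfl fun e _ => Finset.sum_congr rfl fun e' _ => by ring
  -- generic double-sum manipulation lemmas
  have hmul2 : ∀ (k : ℝ) (f : Fin n → Fin n → ℝ),
      k * (∑ a, ∑ c, f a c) = ∑ a, ∑ c, k * f a c := by
    intro k f
    rw [Finset.mul_sum]
    exact Finset.sum_congr rfl fun a _ => by rw [Finset.mul_sum]
  have hmul2' : ∀ (k : ℝ) (f : Fin n → Fin n → ℝ),
      (∑ a, ∑ c, f a c) * k = ∑ a, ∑ c, f a c * k := by
    intro k f
    rw [Finset.sum_mul]
    exact Finset.sum_congr rfl fun a _ => by rw [Finset.sum_mul]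
  have hadd2 : ∀ (f h : Fin n → Fin n → ℝ),
      (∑ a, ∑ c, f a c) + (∑ a, ∑ c, h a c) = ∑ a, ∑ c, (f a c + h a c) := by
    intro f h
    rw [← Finset.sum_add_distrib]
    exact Finset.sum_congr rfl fun a _ => by rw [← Finset.sum_add_distrib]
  have hsub2 : ∀ (f h : Fin n → Fin n → ℝ),
      (∑ a, ∑ c, f a c) - (∑ a, ∑ c, h a c) = ∑ a, ∑ c, (f a c - h a c) := by
    intro f h
    rw [← Finset.sum_sub_distrib]
    exact Finset.sum_congr rfl fun a _ => by rw [← Finset.sum_sub_distrib]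
  -- swap the two contracted indices of g⁻¹
  have swapG : ∀ f : Fin n → Fin n → ℝ,
      (∑ a, ∑ c, g⁻¹ a c * f a c) = ∑ a, ∑ c, g⁻¹ a c * f c a := by
    intro f
    rw [Finset.sum_comm]
    exact Finset.sum_congr rfl fun a _ => Finset.sum_congr rfl fun c _ => by rw [hGsym]
  -- contraction of g⁻¹ with an antisymmetric pair vanishes
  have hanti : ∀ f : Fin n → Fin n → ℝ, (∀ a c, f c a = - f a c) →
      (∑ a, ∑ c, g⁻¹ a c * f a c) = 0 := by
    intro f hf
    have h1 := swapG f
    have h2 : (∑ a, ∑ c, g⁻¹ a c * f c a) = -∑ a, ∑ c, g⁻¹ a c * f a c := by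
      rw [← Finset.sum_neg_distrib]
      refine Finset.sum_congr rfl fun a _ => ?_
      rw [← Finset.sum_neg_distrib]
      exact Finset.sum_congr rfl fun c _ => by rw [hf]; ring
    linarith [h1, h2]
  -- key: contraction of slots 1 and 3 of DH with g⁻¹ vanishes
  have L1 : ∀ β δ, (∑ a, ∑ c, g⁻¹ a c * DH a β c δ) = 0 := by
    intro β δ
    have step : (∑ a, ∑ c, g⁻¹ a c * DH a β c δ)
        = (∑ a, ∑ c, g⁻¹ a c * (- DH β c a δ)) + ∑ a, ∑ c, g⁻¹ a c * (- DH c a β δ) := by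
      rw [hadd2]
      refine Finset.sum_congr rfl fun a _ => Finset.sum_congr rfl fun c _ => ?_
      linear_combination g⁻¹ a c * (hDH2 a β c δ)
    rw [step]
    have e1 : (∑ a, ∑ c, g⁻¹ a c * (- DH β c a δ)) = 0 := by
      rw [swapG (fun a c => - DH β c a δ)]
      have h4 : (∑ a, ∑ c, g⁻¹ a c * (- DH β a c δ))
          = -∑ a, ∑ c, g⁻¹ a c * DH β a c δ := by
        rw [← Finset.sum_neg_distrib]
        refine Finset.sum_congr rfl fun a _ => ?_
        rw [← Finset.sum_neg_distrib]
        exact Finset.sum_congr rfl fun c _ => by ring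
      rw [h4, hDH3 β δ, neg_zero]
    have e2 : (∑ a, ∑ c, g⁻¹ a c * (- DH c a β δ)) = 0 := by
      refine hanti _ fun a c => ?_
      rw [hDH1 a c β δ]; ring
    rw [e1, e2]; ring
  have L1' : ∀ β δ, (∑ a, ∑ c, g⁻¹ a c * DH c β a δ) = 0 := by
    intro β δ
    rw [swapG (fun a c => DH c β a δ)]
    exact L1 β δ
  have hne : (n:ℝ) - 2 ≠ 0 := by
    have : (3:ℝ) ≤ (n:ℝ) := by exact_mod_cast hn
    linarith
  refine ⟨?_, ?_, ?_, ?_⟩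
  · intro a b c d
    rw [hW b a c d, hW a b c d, hDH1 a b c d, hDH1 a b d c]
    ring
  · intro a b c d
    rw [hW a b d c, hW a b c d, hDH1 c d a b, hDH1 c d b a]
    ring
  · intro a b c d
    rw [hW a b c d, hW c d a b, hgsym c a, hgsym c b, hgsym d a, hgsym d b,
      hSsym d b, hSsym d a, hSsym c b, hSsym c a]
    ring
  · intro b d
    have hSbd : S b d = -((∑ a, ∑ c, g⁻¹ a c * DH a b d c)
        + ∑ a, ∑ c, g⁻¹ a c * DH a d b c) := by
      rw [hS, hadd2, ← Finset.sum_neg_distrib]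
      refine Finset.sum_congr rfl fun e _ => ?_
      rw [← Finset.sum_neg_distrib]
      refine Finset.sum_congr rfl fun e' _ => ?_
      rw [hDH1 e b d e', hDH1 e d b e']
      ring
    -- trace of the Kronecker-delta part
    have hB1 : (∑ a, ∑ c, g⁻¹ a c * g a c) = (n:ℝ) := by
      have h1 : ∀ a : Fin n, (∑ c, g⁻¹ a c * g c a) = (1 : Matrix (Fin n) (Fin n) ℝ) a a := by
        intro a
        rw [← Matrix.nonsing_inv_mul g hg, Matrix.mul_apply]
      calc (∑ a, ∑ c, g⁻¹ a c * g a c) = ∑ a, ∑ c, g⁻¹ a c * g c a :=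
            Finset.sum_congr rfl fun a _ => Finset.sum_congr rfl fun c _ => by
              rw [hgsym a c]
        _ = ∑ a : Fin n, (1 : Matrix (Fin n) (Fin n) ℝ) a a :=
            Finset.sum_congr rfl fun a _ => h1 a
        _ = (n:ℝ) := by simp [Matrix.one_apply]
    have hB2 : (∑ a, ∑ c, g⁻¹ a c * (g a d * S b c)) = S b d := by
      rw [Finset.sum_comm]
      have h1 : ∀ c : Fin n, (∑ a, g⁻¹ a c * (g a d * S b c))
          = (1 : Matrix (Fin n) (Fin n) ℝ) d c * S b c := by
        intro c
        rw [← Matrix.mul_nonsing_inv g hg, Matrix.mul_apply, Finset.sum_mul]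
        exact Finset.sum_congr rfl fun a _ => by rw [hgsym a d]; ring
      rw [Finset.sum_congr rfl fun c _ => h1 c]
      simp [Matrix.one_apply]
    have hB3 : (∑ a, ∑ c, g⁻¹ a c * (g b c * S a d)) = S b d := by
      have h1 : ∀ a : Fin n, (∑ c, g⁻¹ a c * (g b c * S a d))
          = (1 : Matrix (Fin n) (Fin n) ℝ) a b * S a d := by
        intro a
        rw [← Matrix.nonsing_inv_mul g hg, Matrix.mul_apply, Finset.sum_mul]
        exact Finset.sum_congr rfl fun c _ => by rw [hgsym b c]; ring
      rw [Finset.sum_congr rfl fun a _ => h1 a]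
      simp [Matrix.one_apply]
    have swap4 : ∀ F : Fin n → Fin n → Fin n → Fin n → ℝ,
        (∑ a, ∑ c, ∑ e, ∑ e', F a c e e') = ∑ e, ∑ e', ∑ a, ∑ c, F a c e e' := by
      intro F
      calc (∑ a, ∑ c, ∑ e, ∑ e', F a c e e')
          = ∑ a, ∑ e, ∑ c, ∑ e', F a c e e' :=
            Finset.sum_congr rfl fun a _ => Finset.sum_comm
        _ = ∑ e, ∑ a, ∑ c, ∑ e', F a c e e' := Finset.sum_comm
        _ = ∑ e, ∑ a, ∑ e', ∑ c, F a c e e' :=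
            Finset.sum_congr rfl fun e _ =>
              Finset.sum_congr rfl fun a _ => Finset.sum_comm
        _ = ∑ e, ∑ e', ∑ a, ∑ c, F a c e e' :=
            Finset.sum_congr rfl fun e _ => Finset.sum_comm
    have hB4 : (∑ a, ∑ c, g⁻¹ a c * S a c) = 0 := by
      have lhs_eq : (∑ a, ∑ c, g⁻¹ a c * S a c)
          = ∑ a, ∑ c, ∑ e, ∑ e',
              (g⁻¹ e e' * (g⁻¹ a c * DH a e c e') + g⁻¹ e e' * (g⁻¹ a c * DH c e a e')) := by
        refine Finset.sum_congr rfl fun a _ => Finset.sum_congr rfl fun c _ => ?_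
        rw [hS, Finset.mul_sum]
        refine Finset.sum_congr rfl fun e _ => ?_
        rw [Finset.mul_sum]
        exact Finset.sum_congr rfl fun e' _ => by ring
      rw [lhs_eq, swap4]
      refine Finset.sum_eq_zero fun e _ => Finset.sum_eq_zero fun e' _ => ?_
      rw [← hadd2, ← hmul2 (g⁻¹ e e') (fun a c => g⁻¹ a c * DH a e c e'),
        ← hmul2 (g⁻¹ e e') (fun a c => g⁻¹ a c * DH c e a e'), L1 e e', L1' e e']
      ring
    have hA4 : (∑ a, ∑ c, g⁻¹ a c * DH c d b a) = ∑ a, ∑ c, g⁻¹ a c * DH a d b c :=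
      swapG (fun a c => DH c d b a)
    calc (∑ a, ∑ c, g⁻¹ a c * W a b c d)
        = (∑ a, ∑ c, g⁻¹ a c * DH a b c d) - (∑ a, ∑ c, g⁻¹ a c * DH a b d c)
          + ((∑ a, ∑ c, g⁻¹ a c * DH c d a b) - (∑ a, ∑ c, g⁻¹ a c * DH c d b a))
          - (4/((n:ℝ) - 2)) * (1/4) *
              ((∑ a, ∑ c, g⁻¹ a c * g a c) * S b d
                - (∑ a, ∑ c, g⁻¹ a c * (g a d * S b c))
                - (∑ a, ∑ c, g⁻¹ a c * (g b c * S a d))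
                + g b d * (∑ a, ∑ c, g⁻¹ a c * S a c)) := by
          rw [hmul2' (S b d) (fun a c => g⁻¹ a c * g a c),
            hmul2 (g b d) (fun a c => g⁻¹ a c * S a c),
            hsub2, hsub2, hadd2, hsub2, hsub2, hadd2,
            hmul2 ((4/((n:ℝ) - 2)) * (1/4)), hsub2]
          refine Finset.sum_congr rfl fun a _ => Finset.sum_congr rfl fun c _ => ?_
          rw [hW]
          ring
      _ = 0 := by
          rw [L1 b d, L1' d b, hA4, hB1, hB2, hB3, hB4]
          have hk : (4/((n:ℝ) - 2)) * (1/4) * ((n:ℝ) - 2) = 1 := by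
            field_simp
          linear_combination (-1 : ℝ) * hSbd - S b d * hk
end
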